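/- arXiv:1906.10949 — 7 statements merged into one kernel-verified Lean document; each statement's English description precedes it below -/
import Mathlib

section
/- There exist a constant C > 0 and an integer n₀ ≥ 1 (both depending only on θ and the sequence (p_i)) such that for every real δ ∈ [0,1] and every integer n ≥ n₀ one has Σ_{i≥1} (1 − exp(−n δ p_i)) ≤ C · α(n) · δ^{θ/2}. (Here Σ_{i≥1}(1 − e^{−s p_i}) is the expected number E R(s) of occupied urns at Poisson time s in the Poissonized infinite urn scheme.) -/
/-!
Regular variation of `α` with index `θ ∈ (0, 1)` gives, beyond some threshold `T`, the doubling
bounds `2 ^ (θ / 2) α(x) ≤ α(2x) ≤ r α(x)` with `r < 2`. Since `1 - e^{-u} ≤ min 1 u`, cutting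
the `p i` into dyadic layers bounds the expected occupancy at time `t ≥ T` by
`2 ∑ₖ 2⁻ᵏ α(2ᵏ t) ≤ 2 α(t) / (1 - r / 2)`, and iterating the lower doubling bound gives the
Potter-type estimate `α(δ n) ≤ (2 δ) ^ (θ / 2) α(n)`. For `n δ < T` the occupancy is at most
`n δ`, which the same estimate, applied at `T`, bounds by a multiple of `α(n) δ ^ (θ / 2)`.
-/

open Filter Topology Real Finset

/-- The paper's `α(x)`. -/
noncomputable def heavyCount {ι : Type*} (p : ι → ℝ) (x : ℝ) : ℝ :=
  Set.ncard {i | p i ≥ 1 / x}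

/-- `E R(s)` in the paper: urn `i` is occupied at Poisson time `s` with probability
`1 - exp (-(s * p i))`. -/
noncomputable def expectedOccupied {ι : Type*} (p : ι → ℝ) (s : ℝ) : ℝ :=
  ∑' i, (1 - exp (-(s * p i)))

section HeavyCount

variable {ι : Type*} {p : ι → ℝ}

theorem Summable.finite_setOf_le (hp : Summable p) {ε : ℝ} (hε : 0 < ε) :
    {i | ε ≤ p i}.Finite := by
  simpa [not_lt] using eventually_cofinite.mp (hp.tendsto_cofinite_zero.eventually_lt_const hε)

theorem heavyCount_nonneg (x : ℝ) : 0 ≤ heavyCount p x :=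
  Nat.cast_nonneg _

theorem card_filter_le_heavyCount (hp : Summable p) {x : ℝ} (hx : 0 < x) (s : Finset ι) :
    (#(s.filter fun i => p i ≥ 1 / x) : ℝ) ≤ heavyCount p x := by
  rw [heavyCount, ← Set.ncard_coe_finset, Nat.cast_le]
  exact Set.ncard_le_ncard (by simp [Set.subset_def])
    (hp.finite_setOf_le (one_div_pos.mpr hx))

theorem heavyCount_monotoneOn (hp : Summable p) : MonotoneOn (heavyCount p) (Set.Ioi 0) := by
  intro x hx y hy hxy
  rw [heavyCount, heavyCount, Nat.cast_le]
  exact Set.ncard_le_ncard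
    (fun i (hi : 1 / x ≤ p i) => (one_div_le_one_div_of_le hx hxy).trans hi)
    (hp.finite_setOf_le (one_div_pos.mpr hy))

theorem eventually_heavyCount_pos (hp : Summable p) {i : ι} (hi : 0 < p i) :
    ∀ᶠ x in atTop, 0 < heavyCount p x := by
  filter_upwards [eventually_ge_atTop (1 / p i)] with x hx
  have hx0 : 0 < x := (one_div_pos.mpr hi).trans_le hx
  rw [heavyCount, Nat.cast_pos]
  exact (Set.ncard_pos (hp.finite_setOf_le (one_div_pos.mpr hx0))).mpr
    ⟨i, (one_div_le hx0 hi).mpr hx⟩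

end HeavyCount

section Occupancy

variable {ι : Type*} {p : ι → ℝ}

theorem one_sub_exp_neg_le_min (u : ℝ) : 1 - exp (-u) ≤ min 1 u :=
  le_min (by linarith [exp_pos (-u)]) (by linarith [add_one_le_exp (-u)])

theorem summable_ite_geometric (P : ℕ → Prop) [DecidablePred P] :
    Summable fun k => if P k then (1 / 2 : ℝ) ^ k else 0 :=
  summable_geometric_two.of_nonneg_of_le (fun k => by split_ifs <;> positivity)
    (fun k => by split_ifs <;> simp)

theorem min_one_le_two_mul_tsum {t q : ℝ} (ht : 0 < t) :
    min 1 (t * q) ≤ 2 * ∑' k : ℕ, if q ≥ 1 / (2 ^ k * t) then (1 / 2 : ℝ) ^ k else 0 := by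
  have hnonneg : ∀ k : ℕ, 0 ≤ if q ≥ 1 / (2 ^ k * t) then (1 / 2 : ℝ) ^ k else 0 :=
    fun k => by split_ifs <;> positivity
  rcases le_or_gt (t * q) 0 with hq | hq
  · exact (min_le_right _ _).trans (hq.trans (mul_nonneg zero_le_two (tsum_nonneg hnonneg)))
  -- the first dyadic level `k` with `2 ^ k * t * q ≥ 1` already pays for `min 1 (t * q)`
  obtain ⟨k, hk, hmin⟩ :
      ∃ k : ℕ, q ≥ 1 / (2 ^ k * t) ∧ min 1 (t * q) ≤ 2 * (1 / 2) ^ k := by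
    rcases le_or_gt 1 (t * q) with h1 | h1
    · refine ⟨0, ?_, by norm_num⟩
      rw [pow_zero, one_mul, ge_iff_le, div_le_iff₀ ht]
      linarith
    · obtain ⟨j, hj, hj'⟩ := exists_nat_pow_near (one_le_one_div hq h1.le) one_lt_two
      refine ⟨j + 1, ?_, ?_⟩
      · rw [ge_iff_le, div_le_iff₀ (by positivity)]
        rw [div_lt_iff₀ hq] at hj'
        linarith
      · calc min 1 (t * q) ≤ t * q := min_le_right _ _
          _ ≤ 1 / 2 ^ j := (le_one_div hq (by positivity)).mpr hj
          _ = 2 * (1 / 2) ^ (j + 1) := by rw [one_div_pow, pow_succ]; field_simp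
  calc min 1 (t * q) ≤ 2 * (1 / 2) ^ k := hmin
    _ = 2 * (if q ≥ 1 / (2 ^ k * t) then (1 / 2 : ℝ) ^ k else 0) := by rw [if_pos hk]
    _ ≤ _ := by
      gcongr
      exact (summable_ite_geometric _).le_tsum k fun j _ => hnonneg j

theorem expectedOccupied_le_mul_tsum (hp : Summable p) (hp0 : ∀ i, 0 ≤ p i) {t : ℝ}
    (ht : 0 ≤ t) :
    expectedOccupied p t ≤ t * ∑' i, p i := by
  have hle : ∀ i, 1 - exp (-(t * p i)) ≤ t * p i :=
    fun i => (one_sub_exp_neg_le_min _).trans (min_le_right _ _)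
  have hnonneg : ∀ i, 0 ≤ 1 - exp (-(t * p i)) :=
    fun i => sub_nonneg.mpr (exp_le_one_iff.mpr (neg_nonpos.mpr (mul_nonneg ht (hp0 i))))
  rw [← tsum_mul_left]
  exact ((hp.mul_left t).of_nonneg_of_le hnonneg hle).tsum_le_tsum hle (hp.mul_left t)

/-- Layer-cake bound: the urns with `p i ≥ 1 / (2 ^ k * t)` are counted with weight `2⁻ᵏ`. -/
theorem expectedOccupied_le_two_mul_tsum (hp : Summable p) {t : ℝ} (ht : 0 < t)
    (hA : Summable fun k : ℕ => (1 / 2 : ℝ) ^ k * heavyCount p (2 ^ k * t)) :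
    expectedOccupied p t ≤ 2 * ∑' k : ℕ, (1 / 2 : ℝ) ^ k * heavyCount p (2 ^ k * t) := by
  refine tsum_le_of_sum_le'
    (mul_nonneg zero_le_two (tsum_nonneg fun k => mul_nonneg (by positivity) (heavyCount_nonneg _)))
    fun s => ?_
  calc ∑ i ∈ s, (1 - exp (-(t * p i)))
      ≤ ∑ i ∈ s, 2 * ∑' k : ℕ, if p i ≥ 1 / (2 ^ k * t) then (1 / 2 : ℝ) ^ k else 0 :=
        sum_le_sum fun i _ => (one_sub_exp_neg_le_min _).trans (min_one_le_two_mul_tsum ht)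
    _ = 2 * ∑' k : ℕ, ∑ i ∈ s, if p i ≥ 1 / (2 ^ k * t) then (1 / 2 : ℝ) ^ k else 0 := by
        rw [← mul_sum, Summable.tsum_finsetSum fun i _ => summable_ite_geometric _]
    _ ≤ 2 * ∑' k : ℕ, (1 / 2 : ℝ) ^ k * heavyCount p (2 ^ k * t) := by
        refine mul_le_mul_of_nonneg_left ?_ zero_le_two
        refine (summable_sum fun i _ => summable_ite_geometric _).tsum_le_tsum (fun k => ?_) hA
        rw [sum_ite, sum_const_zero, add_zero, sum_const, nsmul_eq_mul, mul_comm]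
        exact mul_le_mul_of_nonneg_left (card_filter_le_heavyCount hp (by positivity) s)
          (by positivity)

theorem expectedOccupied_le_of_doubling (hp : Summable p) {t r : ℝ} (ht : 0 < t) (hr0 : 0 ≤ r)
    (hr2 : r < 2) (hdouble : ∀ x ≥ t, heavyCount p (2 * x) ≤ r * heavyCount p x) :
    expectedOccupied p t ≤ 2 / (1 - r / 2) * heavyCount p t := by
  have hiter (k : ℕ) : heavyCount p (2 ^ k * t) ≤ r ^ k * heavyCount p t := by
    simpa using le_geom (u := fun k => heavyCount p (2 ^ k * t)) hr0 k fun j _ => by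
      rw [pow_succ, mul_comm _ 2, mul_assoc]
      exact hdouble _ (le_mul_of_one_le_left ht.le (one_le_pow₀ one_le_two))
  have hgeom (k : ℕ) :
      (1 / 2 : ℝ) ^ k * heavyCount p (2 ^ k * t) ≤ (r / 2) ^ k * heavyCount p t := by
    rw [div_pow, div_pow, one_pow, div_mul_eq_mul_div, div_mul_eq_mul_div,
      div_le_div_iff_of_pos_right (by positivity), one_mul]
    exact hiter k
  have hsum : Summable fun k : ℕ => (r / 2) ^ k * heavyCount p t :=
    (summable_geometric_of_lt_one (by positivity) (by linarith)).mul_right _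
  have hA := hsum.of_nonneg_of_le (fun k => mul_nonneg (by positivity) (heavyCount_nonneg _)) hgeom
  calc expectedOccupied p t ≤ 2 * ∑' k : ℕ, (1 / 2 : ℝ) ^ k * heavyCount p (2 ^ k * t) :=
        expectedOccupied_le_two_mul_tsum hp ht hA
    _ ≤ 2 * ∑' k : ℕ, (r / 2) ^ k * heavyCount p t :=
        mul_le_mul_of_nonneg_left (hA.tsum_le_tsum hgeom hsum) zero_le_two
    _ = 2 / (1 - r / 2) * heavyCount p t := by
        rw [tsum_mul_right, tsum_geometric_of_lt_one (by positivity) (by linarith)]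
        ring

end Occupancy

section RegularVariation

variable {f L : ℝ → ℝ} {θ : ℝ}

theorem tendsto_div_of_eq_rpow_mul (hf : ∀ x > 0, f x = x ^ θ * L x) {c : ℝ} (hc : 0 < c)
    (hL : Tendsto (fun x => L (c * x) / L x) atTop (𝓝 1)) :
    Tendsto (fun x => f (c * x) / f x) atTop (𝓝 (c ^ θ)) := by
  rw [← mul_one (c ^ θ)]
  refine (hL.const_mul (c ^ θ)).congr' ?_
  filter_upwards [eventually_gt_atTop 0] with x hx
  rw [hf x hx, hf (c * x) (mul_pos hc hx), mul_rpow hc.le hx.le, mul_assoc, mul_div_assoc,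
    mul_div_mul_left _ _ (rpow_pos_of_pos hx θ).ne']

theorem exists_doubling_bounds (hf : ∀ x > 0, f x = x ^ θ * L x) (hθ : θ ∈ Set.Ioo 0 1)
    (hL : Tendsto (fun x => L (2 * x) / L x) atTop (𝓝 1)) (hpos : ∀ᶠ x in atTop, 0 < f x) :
    ∃ T > 0, ∃ r, 0 ≤ r ∧ r < 2 ∧
      ∀ x ≥ T, 0 < f x ∧ f (2 * x) ≤ r * f x ∧ 2 ^ (θ / 2) * f x ≤ f (2 * x) := by
  obtain ⟨r, hθr, hr2⟩ : ∃ r, (2 : ℝ) ^ θ < r ∧ r < 2 :=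
    exists_between (by simpa using rpow_lt_rpow_of_exponent_lt one_lt_two hθ.2)
  have hratio := tendsto_div_of_eq_rpow_mul hf two_pos hL
  have hlow : (2 : ℝ) ^ (θ / 2) < 2 ^ θ :=
    rpow_lt_rpow_of_exponent_lt one_lt_two (by linarith [hθ.1])
  obtain ⟨T, hT⟩ := eventually_atTop.mp
    (hpos.and ((hratio.eventually_lt_const hθr).and (hratio.eventually_const_lt hlow)))
  refine ⟨max T 1, by positivity, r, (rpow_pos_of_pos two_pos θ).le.trans hθr.le, hr2,
    fun x hx => ?_⟩
  obtain ⟨hfx, hup, hdown⟩ := hT x (le_of_max_le_left hx)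
  exact ⟨hfx, ((div_lt_iff₀ hfx).mp hup).le, ((lt_div_iff₀ hfx).mp hdown).le⟩

theorem le_rpow_mul_of_doubling {T β : ℝ} (hT : 0 < T) (hβ : 0 ≤ β)
    (hmono : MonotoneOn f (Set.Ici T)) (hdouble : ∀ y ≥ T, 2 ^ β * f y ≤ f (2 * y))
    {x y : ℝ} (hy : T ≤ y) (hyx : y ≤ x) (hfy : 0 ≤ f y) :
    f y ≤ (2 * y / x) ^ β * f x := by
  have hy0 : 0 < y := hT.trans_le hy
  have hx0 : 0 < x := hy0.trans_le hyx
  have hT2 (k : ℕ) : T ≤ 2 ^ k * y :=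
    hy.trans (le_mul_of_one_le_left hy0.le (one_le_pow₀ one_le_two))
  obtain ⟨k, hk, hk'⟩ := exists_nat_pow_near ((one_le_div hy0).mpr hyx) one_lt_two
  have hgeom : (2 ^ β) ^ k * f y ≤ f (2 ^ k * y) := by
    simpa using geom_le (u := fun j => f (2 ^ j * y)) (by positivity) k fun j _ => by
      rw [pow_succ, mul_comm _ 2, mul_assoc]
      exact hdouble _ (hT2 j)
  have hkx : f (2 ^ k * y) ≤ f x := hmono (hT2 k) (hy.trans hyx) ((le_div_iff₀ hy0).mp hk)
  have hone : 1 ≤ (2 * y / x) ^ β * (2 ^ β) ^ k := by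
    rw [← rpow_natCast, ← rpow_mul zero_le_two, mul_comm β, rpow_mul zero_le_two, rpow_natCast,
      ← mul_rpow (by positivity) (by positivity)]
    refine one_le_rpow ?_ hβ
    rw [div_mul_eq_mul_div, one_le_div hx0]
    rw [div_lt_iff₀ hy0, pow_succ] at hk'
    linarith
  calc f y ≤ ((2 * y / x) ^ β * (2 ^ β) ^ k) * f y := le_mul_of_one_le_left hfy hone
    _ = (2 * y / x) ^ β * ((2 ^ β) ^ k * f y) := mul_assoc _ _ _
    _ ≤ (2 * y / x) ^ β * f x := mul_le_mul_of_nonneg_left (hgeom.trans hkx) (by positivity)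

theorem mul_le_of_doubling {T β : ℝ} (hT : 0 < T) (hβ : β ∈ Set.Icc 0 1)
    (hmono : MonotoneOn f (Set.Ici T)) (hdouble : ∀ y ≥ T, 2 ^ β * f y ≤ f (2 * y))
    (hfT : 0 < f T) {x δ : ℝ} (hx : T ≤ x) (hδ : 0 ≤ δ) (hxδ : x * δ ≤ T) :
    x * δ ≤ T / f T * 2 ^ β * δ ^ β * f x := by
  have hx0 : 0 < x := hT.trans_le hx
  have hpotter := le_rpow_mul_of_doubling hT hβ.1 hmono hdouble le_rfl hx hfT.le
  calc x * δ = T * (x * δ / T) := by field_simp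
    _ ≤ T * (x * δ / T) ^ β := by
        gcongr
        exact self_le_rpow_of_le_one (by positivity) ((div_le_one hT).mpr hxδ) hβ.2
    _ = T / f T * ((x / T) ^ β * f T) * δ ^ β := by
        rw [mul_div_right_comm, mul_rpow (by positivity) hδ]
        field_simp
    _ ≤ T / f T * ((x / T) ^ β * ((2 * T / x) ^ β * f x)) * δ ^ β := by gcongr
    _ = T / f T * 2 ^ β * δ ^ β * f x := by
        rw [← mul_assoc (_ ^ β), ← mul_rpow (by positivity) (by positivity),
          show x / T * (2 * T / x) = 2 by field_simp]
        ring

end RegularVariation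

theorem expectedOccupied_mul_le_of_doubling {ι : Type*} {p : ι → ℝ} (hp : Summable p)
    (hp0 : ∀ i, 0 ≤ p i) (hp1 : ∑' i, p i = 1) {T r β : ℝ} (hT : 0 < T) (hr0 : 0 ≤ r)
    (hr2 : r < 2) (hβ : β ∈ Set.Icc 0 1)
    (hbounds : ∀ x ≥ T, 0 < heavyCount p x ∧ heavyCount p (2 * x) ≤ r * heavyCount p x ∧
      2 ^ β * heavyCount p x ≤ heavyCount p (2 * x))
    {x δ : ℝ} (hx : T ≤ x) (hδ : δ ∈ Set.Icc 0 1) :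
    expectedOccupied p (x * δ) ≤
      2 ^ β * max (2 / (1 - r / 2)) (T / heavyCount p T) * heavyCount p x * δ ^ β := by
  have hmono : MonotoneOn (heavyCount p) (Set.Ici T) :=
    (heavyCount_monotoneOn hp).mono fun y hy => hT.trans_le hy
  have hdouble : ∀ y ≥ T, 2 ^ β * heavyCount p y ≤ heavyCount p (2 * y) :=
    fun y hy => (hbounds y hy).2.2
  have hK : 0 < 2 / (1 - r / 2) := div_pos two_pos (by linarith)
  rcases le_or_gt T (x * δ) with hlarge | hsmall
  · calc expectedOccupied p (x * δ) ≤ 2 / (1 - r / 2) * heavyCount p (x * δ) :=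
          expectedOccupied_le_of_doubling hp (hT.trans_le hlarge) hr0 hr2
            fun y hy => (hbounds y (hlarge.trans hy)).2.1
      _ ≤ 2 / (1 - r / 2) * ((2 * (x * δ) / x) ^ β * heavyCount p x) :=
          mul_le_mul_of_nonneg_left (le_rpow_mul_of_doubling hT hβ.1 hmono hdouble hlarge
            (mul_le_of_le_one_right (hT.le.trans hx) hδ.2) (heavyCount_nonneg _)) hK.le
      _ = 2 ^ β * (2 / (1 - r / 2)) * heavyCount p x * δ ^ β := by
          rw [show 2 * (x * δ) / x = 2 * δ by field_simp [(hT.trans_le hx).ne'],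
            mul_rpow zero_le_two hδ.1]
          ring
      _ ≤ _ := by
          gcongr
          · exact rpow_nonneg hδ.1 _
          · exact heavyCount_nonneg _
          · exact le_max_left _ _
  · calc expectedOccupied p (x * δ) ≤ x * δ * ∑' i, p i :=
          expectedOccupied_le_mul_tsum hp hp0 (mul_nonneg (hT.le.trans hx) hδ.1)
      _ = x * δ := by rw [hp1, mul_one]
      _ ≤ T / heavyCount p T * 2 ^ β * δ ^ β * heavyCount p x :=
          mul_le_of_doubling hT hβ hmono hdouble (hbounds T le_rfl).1 hx hδ.1 hsmall.le
      _ ≤ _ := by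
          rw [mul_comm _ (2 ^ β), mul_right_comm _ _ (heavyCount p x)]
          gcongr
          · exact rpow_nonneg hδ.1 _
          · exact heavyCount_nonneg _
          · exact le_max_right _ _

theorem occupancy_expectation_bound_theta_lt_one_general
    (p : ℕ → ℝ) (hp_pos : ∀ i, 0 < p i)
    (hp_sum : ∑' i, p i = 1)
    (θ : ℝ) (hθ : θ ∈ Set.Ioo (0 : ℝ) 1)
    (L : ℝ → ℝ)
    (hL : ∀ c > (0 : ℝ), Tendsto (fun x => L (c * x) / L x) atTop (𝓝 1))
    (hα : ∀ x > (0 : ℝ), ((Set.ncard {i : ℕ | p i ≥ 1 / x} : ℝ)) = x ^ θ * L x) :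
    ∃ C > (0 : ℝ), ∃ n₀ : ℕ, 1 ≤ n₀ ∧
      ∀ δ : ℝ, δ ∈ Set.Icc (0 : ℝ) 1 → ∀ n : ℕ, n₀ ≤ n →
        ∑' i, (1 - Real.exp (-((n : ℝ) * δ * p i)))
          ≤ C * ((Set.ncard {i : ℕ | p i ≥ 1 / (n : ℝ)} : ℝ)) * δ ^ (θ / 2) := by
  have hp : Summable p := by
    by_contra h
    simp [tsum_eq_zero_of_not_summable h] at hp_sum
  obtain ⟨T, hT, r, hr0, hr2, hbounds⟩ := exists_doubling_bounds (f := heavyCount p) hα hθ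
    (hL 2 two_pos) (eventually_heavyCount_pos hp (hp_pos 0))
  refine ⟨2 ^ (θ / 2) * max (2 / (1 - r / 2)) (T / heavyCount p T),
    mul_pos (by positivity) (lt_max_of_lt_left (div_pos two_pos (by linarith))),
    max 1 ⌈T⌉₊, le_max_left _ _, fun δ hδ n hn => ?_⟩
  have hnT : T ≤ n := (Nat.le_ceil T).trans (by exact_mod_cast le_of_max_le_right hn)
  exact expectedOccupied_mul_le_of_doubling hp (fun i => (hp_pos i).le) hp_sum hT hr0 hr2
    ⟨by linarith [hθ.1], by linarith [hθ.2]⟩ hbounds hnT hδ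

/-- Lemma 2.1 for θ ∈ (0,1): there exist `C > 0` and `n₀ ≥ 1` such that for every
`δ ∈ [0,1]` and every `n ≥ n₀`, the expected number of occupied urns at Poisson time
`n δ`, namely `∑_{i} (1 − exp(−n δ p_i))`, is at most `C · α(n) · δ^{θ/2}`,
where `α(x) = #{i : p_i ≥ 1/x} = x^θ L(x)` with `L` slowly varying. -/
theorem occupancy_expectation_bound_theta_lt_one
    (p : ℕ → ℝ) (hp_pos : ∀ i, 0 < p i) (hp_mono : Antitone p)
    (hp_sum : ∑' i, p i = 1)
    (θ : ℝ) (hθ : θ ∈ Set.Ioo (0 : ℝ) 1)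
    (L : ℝ → ℝ)
    (hL : ∀ c > (0 : ℝ), Tendsto (fun x => L (c * x) / L x) atTop (𝓝 1))
    (hα : ∀ x > (0 : ℝ), ((Set.ncard {i : ℕ | p i ≥ 1 / x} : ℝ)) = x ^ θ * L x) :
    ∃ C > (0 : ℝ), ∃ n₀ : ℕ, 1 ≤ n₀ ∧
      ∀ δ : ℝ, δ ∈ Set.Icc (0 : ℝ) 1 → ∀ n : ℕ, n₀ ≤ n →
        ∑' i, (1 - Real.exp (-((n : ℝ) * δ * p i)))
          ≤ C * ((Set.ncard {i : ℕ | p i ≥ 1 / (n : ℝ)} : ℝ)) * δ ^ (θ / 2) :=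
  occupancy_expectation_bound_theta_lt_one_general p hp_pos hp_sum θ hθ L hL hα
end

section
/- For all ε, δ ∈ (0,1) there exists an integer N = N(ε, δ) such that for every integer n ≥ N, P( {ω : for every t ∈ [0,1] there exists τ ≥ 0 with |τ − t| ≤ δ and Π(nτ)(ω) = ⌊nt⌋} ) ≥ 1 − ε. -/
open Filter Topology Real MeasureTheory ProbabilityTheory

/-!
By the strong law of large numbers `T m / m → 1` almost surely (the mean `1` of `E j` comes from
the layer-cake formula and the tail `P (E j > t) = exp (-t)`), which upgrades to
`max_{m ≤ n} |T m - m| = o(n)`; hence the probability that `|T m - m| + 1 ≤ δ n` for all `m ≤ n`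
tends to `1`. On that event, and since `T` is almost surely strictly increasing, `τ = T m / n`
with `m = ⌊n t⌋` works: `Π (T m) = m` and `|n τ - n t| ≤ |T m - m| + |m - n t| ≤ δ n`.
-/

section ExponentialLaw

variable {Ω : Type*} [MeasurableSpace Ω] {P : Measure Ω} [IsProbabilityMeasure P] {X : Ω → ℝ}

lemma measure_le_zero_of_cdf_eq_one_sub_exp
    (hcdf : ∀ x : ℝ, 0 ≤ x → (P {ω | X ω ≤ x}).toReal = 1 - exp (-x)) {a : ℝ} (ha : a ≤ 0) :
    P {ω | X ω ≤ a} = 0 :=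
  measure_mono_null (fun _ hω => le_trans hω ha)
    ((measureReal_eq_zero_iff (s := {ω | X ω ≤ 0})).1
      (by simpa [measureReal_def] using hcdf 0 le_rfl))

lemma ae_pos_of_cdf_eq_one_sub_exp
    (hcdf : ∀ x : ℝ, 0 ≤ x → (P {ω | X ω ≤ x}).toReal = 1 - exp (-x)) :
    ∀ᵐ ω ∂P, 0 < X ω := by
  simpa only [ae_iff, not_lt] using measure_le_zero_of_cdf_eq_one_sub_exp hcdf le_rfl

lemma measure_lt_eq_exp_neg_of_cdf_eq_one_sub_exp (hX : Measurable X)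
    (hcdf : ∀ x : ℝ, 0 ≤ x → (P {ω | X ω ≤ x}).toReal = 1 - exp (-x)) {t : ℝ} (ht : 0 ≤ t) :
    P {ω | t < X ω} = ENNReal.ofReal (exp (-t)) := by
  have hcompl : {ω | t < X ω} = {ω | X ω ≤ t}ᶜ := by ext; simp
  rw [← ofReal_measureReal, hcompl,
    probReal_compl_eq_one_sub (measurableSet_le hX measurable_const), measureReal_def, hcdf t ht, sub_sub_cancel]

lemma lintegral_ofReal_eq_one_of_cdf_eq_one_sub_exp (hX : Measurable X)
    (hcdf : ∀ x : ℝ, 0 ≤ x → (P {ω | X ω ≤ x}).toReal = 1 - exp (-x)) :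
    ∫⁻ ω, ENNReal.ofReal (X ω) ∂P = 1 := by
  have hnonneg : 0 ≤ᵐ[P] X := (ae_pos_of_cdf_eq_one_sub_exp hcdf).mono fun _ h => h.le
  calc ∫⁻ ω, ENNReal.ofReal (X ω) ∂P = ∫⁻ t in Set.Ioi 0, P {ω | t < X ω} :=
        lintegral_eq_lintegral_meas_lt P hnonneg hX.aemeasurable
    _ = ∫⁻ t in Set.Ioi 0, ENNReal.ofReal (exp (-t)) :=
        setLIntegral_congr_fun measurableSet_Ioi fun t ht =>
          measure_lt_eq_exp_neg_of_cdf_eq_one_sub_exp hX hcdf (le_of_lt ht)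
    _ = 1 := by
        rw [← ofReal_integral_eq_lintegral_ofReal (integrableOn_exp_neg_Ioi 0)
          (ae_of_all _ fun t => (exp_pos _).le), integral_exp_neg_Ioi_zero, ENNReal.ofReal_one]

lemma integrable_of_cdf_eq_one_sub_exp (hX : Measurable X)
    (hcdf : ∀ x : ℝ, 0 ≤ x → (P {ω | X ω ≤ x}).toReal = 1 - exp (-x)) :
    Integrable X P := by
  refine ⟨hX.aestronglyMeasurable, ?_⟩
  rw [hasFiniteIntegral_iff_ofReal ((ae_pos_of_cdf_eq_one_sub_exp hcdf).mono fun _ h => h.le),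
    lintegral_ofReal_eq_one_of_cdf_eq_one_sub_exp hX hcdf]
  exact ENNReal.one_lt_top

lemma integral_eq_one_of_cdf_eq_one_sub_exp (hX : Measurable X)
    (hcdf : ∀ x : ℝ, 0 ≤ x → (P {ω | X ω ≤ x}).toReal = 1 - exp (-x)) :
    P[X] = 1 := by
  rw [integral_eq_lintegral_of_nonneg_ae
    ((ae_pos_of_cdf_eq_one_sub_exp hcdf).mono fun _ h => h.le) hX.aestronglyMeasurable,
    lintegral_ofReal_eq_one_of_cdf_eq_one_sub_exp hX hcdf, ENNReal.toReal_one]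

lemma identDistrib_of_cdf_eq_one_sub_exp {Y : Ω → ℝ} (hX : Measurable X) (hY : Measurable Y)
    (hcdfX : ∀ x : ℝ, 0 ≤ x → (P {ω | X ω ≤ x}).toReal = 1 - exp (-x))
    (hcdfY : ∀ x : ℝ, 0 ≤ x → (P {ω | Y ω ≤ x}).toReal = 1 - exp (-x)) :
    IdentDistrib X Y P P := by
  have := Measure.isProbabilityMeasure_map (μ := P) hX.aemeasurable
  have := Measure.isProbabilityMeasure_map (μ := P) hY.aemeasurable
  refine ⟨hX.aemeasurable, hY.aemeasurable, Measure.ext_of_Iic _ _ fun a => ?_⟩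
  rw [Measure.map_apply hX measurableSet_Iic, Measure.map_apply hY measurableSet_Iic]
  rcases le_total 0 a with ha | ha
  · rw [← ofReal_measureReal, ← ofReal_measureReal, measureReal_def, measureReal_def]
    exact congrArg ENNReal.ofReal ((hcdfX a ha).trans (hcdfY a ha).symm)
  · exact (measure_le_zero_of_cdf_eq_one_sub_exp hcdfX ha).trans
      (measure_le_zero_of_cdf_eq_one_sub_exp hcdfY ha).symm

end ExponentialLaw

lemma eventually_forall_abs_sub_le_mul_of_tendsto_div {u : ℕ → ℝ}
    (hu : Tendsto (fun m : ℕ => u m / m) atTop (𝓝 1)) {δ : ℝ} (hδ : 0 < δ) :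
    ∀ᶠ n : ℕ in atTop, ∀ m ≤ n, |u m - m| ≤ δ * n := by
  have hlarge : ∀ᶠ m : ℕ in atTop, |u m - m| ≤ δ * m := by
    filter_upwards [hu.eventually (Metric.closedBall_mem_nhds 1 hδ), eventually_gt_atTop 0]
      with m hm hm0
    have hm0' : (0 : ℝ) < m := by exact_mod_cast hm0
    have hdecomp : u m - m = (u m / m - 1) * m := by field_simp
    rw [hdecomp, abs_mul, abs_of_pos hm0']
    exact mul_le_mul_of_nonneg_right hm hm0'.le
  obtain ⟨M, hM⟩ := eventually_atTop.1 hlarge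
  set K := ∑ m ∈ Finset.range M, |u m - m|
  filter_upwards [eventually_ge_atTop M,
    tendsto_natCast_atTop_atTop.eventually_ge_atTop (K / δ)] with n hMn hKn m hmn
  have hmn' : (m : ℝ) ≤ n := by exact_mod_cast hmn
  rcases lt_or_ge m M with hmM | hmM
  · calc |u m - m| ≤ K :=
          Finset.single_le_sum (fun i _ => abs_nonneg (u i - i)) (Finset.mem_range.2 hmM)
      _ ≤ δ * n := by rwa [div_le_iff₀' hδ] at hKn
  · exact (hM m hmM).trans (by gcongr)

lemma sSup_setOf_le_apply_of_strictMono {T : ℕ → ℝ} (hT : StrictMono T) (m : ℕ) :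
    sSup {k : ℕ | T k ≤ T m} = m := by
  simp only [hT.le_iff_le]
  exact csSup_Iic

lemma exists_time_change_of_forall_abs_sub_le {T : ℕ → ℝ} (hmono : StrictMono T) (hT0 : 0 ≤ T 0)
    {n : ℕ} {δ : ℝ} (hT : ∀ m ≤ n, |T m - m| + 1 ≤ δ * n) {t : ℝ} (ht : t ∈ Set.Icc (0 : ℝ) 1) :
    ∃ τ : ℝ, 0 ≤ τ ∧ |τ - t| ≤ δ ∧ sSup {k : ℕ | T k ≤ n * τ} = ⌊(n : ℝ) * t⌋₊ := by
  have hn : (0 : ℝ) < n := by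
    rcases Nat.eq_zero_or_pos n with rfl | h
    · have h0 := hT 0 le_rfl
      simp only [Nat.cast_zero, mul_zero] at h0
      linarith [abs_nonneg (T 0 - 0)]
    · exact_mod_cast h
  set m := ⌊(n : ℝ) * t⌋₊
  have hnt : 0 ≤ (n : ℝ) * t := mul_nonneg hn.le ht.1
  have hmn : m ≤ n := Nat.floor_le_of_le (by nlinarith [ht.2] : (n : ℝ) * t ≤ n)
  have hm_le : (m : ℝ) ≤ n * t := Nat.floor_le hnt
  have hm_gt : (n : ℝ) * t < m + 1 := Nat.lt_floor_add_one _
  have hTm := hT m hmn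
  refine ⟨T m / n, div_nonneg (hT0.trans (hmono.monotone (Nat.zero_le m))) hn.le, ?_, ?_⟩
  · rw [show T m / n - t = (T m - n * t) / n by field_simp, abs_div, abs_of_pos hn,
      div_le_iff₀ hn]
    calc |T m - n * t| ≤ |T m - m| + |(m : ℝ) - n * t| := abs_sub_le _ _ _
      _ ≤ |T m - m| + 1 := by
          gcongr
          rw [abs_le]
          constructor <;> linarith
      _ ≤ δ * n := hTm
  · rw [mul_div_cancel₀ _ hn.ne', sSup_setOf_le_apply_of_strictMono hmono]

lemma ae_tendsto_sum_range_div_of_cdf_eq_one_sub_exp {Ω : Type*} [MeasurableSpace Ω]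
    {P : Measure Ω} [IsProbabilityMeasure P] {E : ℕ → Ω → ℝ} (hE_meas : ∀ j, Measurable (E j))
    (hE_indep : iIndepFun E P)
    (hE_exp : ∀ j, ∀ x : ℝ, 0 ≤ x → (P {ω | E j ω ≤ x}).toReal = 1 - exp (-x)) :
    ∀ᵐ ω ∂P, Tendsto (fun m : ℕ => (∑ j ∈ Finset.range m, E j ω) / m) atTop (𝓝 1) := by
  have hslln := strong_law_ae_real E (integrable_of_cdf_eq_one_sub_exp (hE_meas 0) (hE_exp 0))
    (fun i j hij => hE_indep.indepFun hij)
    (fun i => identDistrib_of_cdf_eq_one_sub_exp (hE_meas i) (hE_meas 0) (hE_exp i) (hE_exp 0))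
  rwa [integral_eq_one_of_cdf_eq_one_sub_exp (hE_meas 0) (hE_exp 0)] at hslln

lemma tendsto_measure_forall_abs_sub_add_one_le {Ω : Type*} [MeasurableSpace Ω]
    {P : Measure Ω} [IsProbabilityMeasure P] {T : ℕ → Ω → ℝ} (hT_meas : ∀ m, Measurable (T m))
    (hT_lim : ∀ᵐ ω ∂P, Tendsto (fun m : ℕ => T m ω / m) atTop (𝓝 1)) {δ : ℝ} (hδ : 0 < δ) :
    Tendsto (fun n : ℕ => (P {ω | ∀ m ≤ n, |T m ω - m| + 1 ≤ δ * n}).toReal) atTop (𝓝 1) := by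
  have hmeas : ∀ n : ℕ, MeasurableSet {ω | ∀ m ≤ n, |T m ω - m| + 1 ≤ δ * n} := fun n => by
    simp only [Set.ofPred_forall]
    exact .iInter fun m => .iInter fun _ =>
      measurableSet_le (((hT_meas m).sub_const _).abs.add_const _) measurable_const
  have hae : ∀ᵐ ω ∂P, ∀ᶠ n : ℕ in atTop, ∀ m ≤ n, |T m ω - m| + 1 ≤ δ * n := by
    filter_upwards [hT_lim] with ω hω
    filter_upwards [eventually_forall_abs_sub_le_mul_of_tendsto_div hω (half_pos hδ),
      tendsto_natCast_atTop_atTop.eventually_ge_atTop (2 / δ)] with n hn h2n m hmn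
    have := hn m hmn
    rw [div_le_iff₀ hδ] at h2n
    linarith
  have hlim := tendsto_measure_of_ae_tendsto_indicator_of_isFiniteMeasure atTop
    MeasurableSet.univ hmeas (by simpa using hae)
  simpa [Function.comp_def] using (ENNReal.tendsto_toReal (measure_ne_top P _)).comp hlim

/-- Lemma 2.2: if `Π` is the unit-rate Poisson counting process built from i.i.d.
standard exponential interarrival times, then for all `ε, δ ∈ (0,1)` there exists `N` such
that for all `n ≥ N`, with probability at least `1 − ε`, for every `t ∈ [0,1]` there is a
`τ ≥ 0` with `|τ − t| ≤ δ` and `Π(nτ) = ⌊nt⌋`. -/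
theorem poisson_time_change_approximation
    {Ω : Type*} [MeasurableSpace Ω] (P : Measure Ω) [IsProbabilityMeasure P]
    (E : ℕ → Ω → ℝ) (hE_meas : ∀ j, Measurable (E j))
    (hE_indep : iIndepFun E P)
    (hE_exp : ∀ j, ∀ x : ℝ, 0 ≤ x →
      (P {ω | E j ω ≤ x}).toReal = 1 - Real.exp (-x))
    (T : ℕ → Ω → ℝ) (hT : ∀ m ω, T m ω = ∑ j ∈ Finset.range m, E j ω)
    (Pi : ℝ → Ω → ℕ) (hPi : ∀ s ω, Pi s ω = sSup {m : ℕ | T m ω ≤ s}) :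
    ∀ ε ∈ Set.Ioo (0 : ℝ) 1, ∀ δ ∈ Set.Ioo (0 : ℝ) 1, ∃ N : ℕ, ∀ n : ℕ, N ≤ n →
      1 - ε ≤ (P {ω | ∀ t ∈ Set.Icc (0 : ℝ) 1, ∃ τ : ℝ, 0 ≤ τ ∧ |τ - t| ≤ δ ∧
        Pi ((n : ℝ) * τ) ω = ⌊(n : ℝ) * t⌋₊}).toReal := by
  intro ε hε δ hδ
  have hT_meas : ∀ m, Measurable (T m) := fun m =>
    funext (hT m) ▸ Finset.measurable_sum _ fun j _ => hE_meas j
  have hT_lim : ∀ᵐ ω ∂P, Tendsto (fun m : ℕ => T m ω / m) atTop (𝓝 1) := by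
    simpa only [hT] using ae_tendsto_sum_range_div_of_cdf_eq_one_sub_exp hE_meas hE_indep hE_exp
  obtain ⟨N, hN⟩ := eventually_atTop.1 ((tendsto_measure_forall_abs_sub_add_one_le hT_meas hT_lim
    hδ.1).eventually (eventually_ge_nhds (by linarith [hε.1] : 1 - ε < 1)))
  refine ⟨N, fun n hn => (hN n hn).trans (ENNReal.toReal_mono (measure_ne_top P _)
    (measure_mono_ae ?_))⟩
  filter_upwards [ae_all_iff.2 fun j => ae_pos_of_cdf_eq_one_sub_exp (hE_exp j)]
    with ω hE_pos hω t ht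
  have hmono : StrictMono fun m => T m ω :=
    strictMono_nat_of_lt_succ fun m => by simpa [hT, Finset.sum_range_succ] using hE_pos m
  simpa only [hPi] using exists_time_change_of_forall_abs_sub_le hmono (by simp [hT]) hω ht
end

section
/- Let a, b ≥ 0 and let X and Y be independent ℕ-valued random variables with X Poisson-distributed with parameter a and Y Poisson-distributed with parameter b. Set u = 1{X + Y is odd} − 1{X is odd}. Then for every integer k ≥ 1, E |u − E u|^k ≤ (2^k + 1) · P(Y > 0) = (2^k + 1)(1 − e^{−b}). -/
/-!
If `Y = 0` then `X + Y` and `X` have the same parity, so `u` vanishes off `{Y > 0}`, and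
`|u| ≤ 1` everywhere. Hence `|E u| ≤ P(Y > 0)`, and `|u − E u|^k` is at most `2^k` on `{Y > 0}`
and at most `|E u|^k ≤ |E u|` off it.
-/

open Real MeasureTheory ProbabilityTheory Set

section CenteredMoment

variable {Ω : Type*} [MeasurableSpace Ω] {P : Measure Ω} {s : Set Ω} {f : Ω → ℝ}

lemma abs_integral_le_measureReal_of_abs_le_indicator [IsFiniteMeasure P]
    (hs : MeasurableSet s) (hf : ∀ ω, |f ω| ≤ s.indicator 1 ω) :
    |∫ ω, f ω ∂P| ≤ P.real s :=
  calc |∫ ω, f ω ∂P| ≤ ∫ ω, |f ω| ∂P := abs_integral_le_integral_abs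
    _ ≤ ∫ ω, s.indicator 1 ω ∂P :=
      integral_mono_of_nonneg (ae_of_all _ fun _ => abs_nonneg _)
        ((integrable_const 1).indicator hs) (ae_of_all _ hf)
    _ = P.real s := integral_indicator_one hs

lemma integral_abs_sub_integral_pow_le_of_abs_le_indicator [IsProbabilityMeasure P]
    (hs : MeasurableSet s) (hf : ∀ ω, |f ω| ≤ s.indicator 1 ω) {k : ℕ} (hk : 1 ≤ k) :
    ∫ ω, |f ω - ∫ ω', f ω' ∂P| ^ k ∂P ≤ (2 ^ k + 1) * P.real s := by
  set m := ∫ ω', f ω' ∂P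
  have hm : |m| ≤ P.real s := abs_integral_le_measureReal_of_abs_le_indicator hs hf
  have hm_one : |m| ≤ 1 := hm.trans measureReal_le_one
  have hpointwise : ∀ ω, |f ω - m| ^ k ≤ s.indicator (fun _ => (2 : ℝ) ^ k) ω + |m| := by
    intro ω
    by_cases hω : ω ∈ s
    · have hf_one : |f ω| ≤ 1 := by simpa [hω] using hf ω
      have hdiff : |f ω - m| ≤ 2 := (abs_sub _ _).trans (by linarith)
      rw [indicator_of_mem hω]
      linarith [pow_le_pow_left₀ (abs_nonneg _) hdiff k, abs_nonneg m]
    · have hf_zero : f ω = 0 := abs_nonpos_iff.mp (by simpa [hω] using hf ω)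
      rw [indicator_of_notMem hω, hf_zero, zero_sub, abs_neg, zero_add]
      exact pow_le_of_le_one (abs_nonneg m) hm_one (by omega)
  have hbound_int : Integrable (fun ω => s.indicator (fun _ => (2 : ℝ) ^ k) ω + |m|) P :=
    ((integrable_const _).indicator hs).add (integrable_const _)
  calc ∫ ω, |f ω - m| ^ k ∂P
      ≤ ∫ ω, (s.indicator (fun _ => (2 : ℝ) ^ k) ω + |m|) ∂P :=
        integral_mono_of_nonneg (ae_of_all _ fun _ => by positivity) hbound_int
          (ae_of_all _ hpointwise)
    _ = 2 ^ k * P.real s + |m| := by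
        rw [integral_add ((integrable_const _).indicator hs) (integrable_const _),
          integral_indicator_const _ hs, integral_const, probReal_univ, smul_eq_mul,
          smul_eq_mul, one_mul, mul_comm]
    _ ≤ (2 ^ k + 1) * P.real s := by linarith

end CenteredMoment

theorem odd_occupancy_single_urn_moment_bound_general
    {Ω : Type*} [MeasurableSpace Ω] (P : Measure Ω) [IsProbabilityMeasure P]
    (b : ℝ)
    (X Y : Ω → ℕ) (hY_meas : Measurable Y)
    (hY : ∀ k : ℕ, (P {ω | Y ω = k}).toReal = Real.exp (-b) * b ^ k / k.factorial)
    (u : Ω → ℝ)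
    (hu : ∀ ω, u ω = (if Odd (X ω + Y ω) then (1 : ℝ) else 0)
      - (if Odd (X ω) then (1 : ℝ) else 0)) :
    ∀ k : ℕ, 1 ≤ k →
      (∫ ω, |u ω - ∫ ω', u ω' ∂P| ^ k ∂P)
          ≤ ((2 : ℝ) ^ k + 1) * (P {ω | 0 < Y ω}).toReal ∧
      ((2 : ℝ) ^ k + 1) * (P {ω | 0 < Y ω}).toReal
          = ((2 : ℝ) ^ k + 1) * (1 - Real.exp (-b)) := by
  intro k hk
  have hs : MeasurableSet {ω | 0 < Y ω} := measurableSet_lt measurable_const hY_meas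
  have hu_le : ∀ ω, |u ω| ≤ {ω | 0 < Y ω}.indicator 1 ω := by
    intro ω
    rcases Nat.eq_zero_or_pos (Y ω) with hY0 | hYpos
    · simp [hu, hY0]
    · rw [indicator_of_mem (show ω ∈ {ω | 0 < Y ω} from hYpos), hu]
      split_ifs <;> norm_num
  have hPY : P.real {ω | 0 < Y ω} = 1 - exp (-b) := by
    have hcompl : {ω | 0 < Y ω} = {ω | Y ω = 0}ᶜ := by
      ext ω
      simp [Nat.pos_iff_ne_zero]
    rw [hcompl, probReal_compl_eq_one_sub (measurableSet_eq_fun hY_meas measurable_const),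
      measureReal_def, hY 0]
    simp
  exact ⟨integral_abs_sub_integral_pow_le_of_abs_le_indicator hs hu_le hk,
    by rw [← measureReal_def, hPY]⟩

/-- Inequality (4) of the paper: if `X ~ Poisson(a)` and `Y ~ Poisson(b)` are independent
and `u = 1{X + Y odd} − 1{X odd}`, then for every `k ≥ 1`,
`E|u − Eu|^k ≤ (2^k + 1) P(Y > 0) = (2^k + 1)(1 − e^{−b})`. -/
theorem odd_occupancy_single_urn_moment_bound
    {Ω : Type*} [MeasurableSpace Ω] (P : Measure Ω) [IsProbabilityMeasure P]
    (a b : ℝ) (ha : 0 ≤ a) (hb : 0 ≤ b)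
    (X Y : Ω → ℕ) (hX_meas : Measurable X) (hY_meas : Measurable Y)
    (h_indep : IndepFun X Y P)
    (hX : ∀ k : ℕ, (P {ω | X ω = k}).toReal = Real.exp (-a) * a ^ k / k.factorial)
    (hY : ∀ k : ℕ, (P {ω | Y ω = k}).toReal = Real.exp (-b) * b ^ k / k.factorial)
    (u : Ω → ℝ)
    (hu : ∀ ω, u ω = (if Odd (X ω + Y ω) then (1 : ℝ) else 0)
      - (if Odd (X ω) then (1 : ℝ) else 0)) :
    ∀ k : ℕ, 1 ≤ k →
      (∫ ω, |u ω - ∫ ω', u ω' ∂P| ^ k ∂P)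
          ≤ ((2 : ℝ) ^ k + 1) * (P {ω | 0 < Y ω}).toReal ∧
      ((2 : ℝ) ^ k + 1) * (P {ω | 0 < Y ω}).toReal
          = ((2 : ℝ) ^ k + 1) * (1 - Real.exp (-b)) :=
  odd_occupancy_single_urn_moment_bound_general P b X Y hY_meas hY u hu
end

section
/- Let p > 0 and 0 ≤ τ₁ ≤ τ₂, and let X and Y be independent ℕ-valued random variables with X Poisson-distributed with parameter τ₁ p and Y Poisson-distributed with parameter (τ₂ − τ₁) p. Set m = τ₂ p · 1{X + Y = 0} − τ₁ p · 1{X = 0}. Then for every integer k ≥ 1, E |m − E m|^k ≤ 4^k · k! · P(Y > 0) = 4^k · k! · (1 − e^{−(τ₂ − τ₁) p}). -/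
open Filter Topology Real MeasureTheory ProbabilityTheory

/-!
Write `a = τ₁ p`, `b = (τ₂ - τ₁) p`. The variable `m` equals `b` on `{X = 0, Y = 0}`, `-a` on
`{X = 0, Y > 0}` and `0` elsewhere, so by independence
`E|m|^k = b^k e^{-a} e^{-b} + a^k e^{-a} (1 - e^{-b})`. Since `x^k e^{-x} ≤ k! (1 - e^{-x})` for
`x ≥ 0`, both terms are at most `k! (1 - e^{-b})`. Centering costs at most a factor `2^k`
(`|x - y|^k ≤ 2^{k-1} (|x|^k + |y|^k)` and Jensen's `|E m|^k ≤ E|m|^k`), and `2^k · 2 ≤ 4^k`.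
-/

open Nat in
theorem Real.pow_mul_exp_neg_le_factorial_mul_one_sub_exp_neg {k : ℕ} (hk : 1 ≤ k) {x : ℝ}
    (hx : 0 ≤ x) : x ^ k * exp (-x) ≤ k ! * (1 - exp (-x)) := by
  have h_one : 1 ≤ ∑ i ∈ Finset.range k, x ^ i / i ! := by
    simpa using Finset.single_le_sum (f := fun i ↦ x ^ i / i !) (fun i _ ↦ by positivity)
      (Finset.mem_range.2 hk)
  have h_exp := Real.sum_le_exp_of_nonneg hx (k + 1)
  rw [Finset.sum_range_succ] at h_exp
  have h_pow : x ^ k ≤ k ! * (exp x - 1) := by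
    rw [← div_le_iff₀' (by positivity)]
    linarith
  calc x ^ k * exp (-x) ≤ k ! * (exp x - 1) * exp (-x) := by gcongr
    _ = k ! * (1 - exp (-x)) := by rw [mul_assoc, sub_mul, ← exp_add]; simp

theorem ProbabilityTheory.IndepFun.measureReal_inter_preimage_eq_mul {Ω β γ : Type*}
    [MeasurableSpace Ω] [MeasurableSpace β] [MeasurableSpace γ] {μ : Measure Ω}
    {f : Ω → β} {g : Ω → γ} (h : IndepFun f g μ) {s : Set β} {t : Set γ}
    (hs : MeasurableSet s) (ht : MeasurableSet t) :
    μ.real (f ⁻¹' s ∩ g ⁻¹' t) = μ.real (f ⁻¹' s) * μ.real (g ⁻¹' t) := by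
  simp only [measureReal_def, h.measure_inter_preimage_eq_mul s t hs ht, ENNReal.toReal_mul]

section CenteredMoment

variable {Ω : Type*} [MeasurableSpace Ω] {μ : Measure Ω} [IsProbabilityMeasure μ] {f : Ω → ℝ}

theorem abs_integral_pow_le_integral_abs_pow (k : ℕ) (hf : Integrable f μ)
    (hfk : Integrable (fun ω ↦ |f ω| ^ k) μ) :
    |∫ ω, f ω ∂μ| ^ k ≤ ∫ ω, |f ω| ^ k ∂μ :=
  calc |∫ ω, f ω ∂μ| ^ k ≤ (∫ ω, |f ω| ∂μ) ^ k :=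
        pow_le_pow_left₀ (abs_nonneg _) abs_integral_le_integral_abs k
    _ ≤ ∫ ω, |f ω| ^ k ∂μ :=
        (convexOn_pow k).map_integral_le (continuousOn_pow k) isClosed_Ici
          (ae_of_all _ fun ω ↦ abs_nonneg (f ω)) hf.abs hfk

theorem integral_abs_sub_integral_pow_le {k : ℕ} (hk : 1 ≤ k) (hf : Integrable f μ)
    (hfk : Integrable (fun ω ↦ |f ω| ^ k) μ) :
    ∫ ω, |f ω - ∫ ω', f ω' ∂μ| ^ k ∂μ ≤ 2 ^ k * ∫ ω, |f ω| ^ k ∂μ := by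
  set c := ∫ ω, f ω ∂μ
  have h_pointwise (ω : Ω) : |f ω - c| ^ k ≤ 2 ^ (k - 1) * (|f ω| ^ k + |c| ^ k) :=
    (pow_le_pow_left₀ (abs_nonneg _) (abs_sub _ _) k).trans
      (add_pow_le (abs_nonneg _) (abs_nonneg _) k)
  calc ∫ ω, |f ω - c| ^ k ∂μ ≤ ∫ ω, 2 ^ (k - 1) * (|f ω| ^ k + |c| ^ k) ∂μ :=
        integral_mono_of_nonneg (ae_of_all _ fun _ ↦ by positivity)
          ((hfk.add (integrable_const _)).const_mul _) (ae_of_all _ h_pointwise)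
    _ = 2 ^ (k - 1) * (∫ ω, |f ω| ^ k ∂μ + |c| ^ k) := by
        rw [integral_const_mul, integral_add hfk (integrable_const _), integral_const]
        simp
    _ ≤ 2 ^ (k - 1) * (∫ ω, |f ω| ^ k ∂μ + ∫ ω, |f ω| ^ k ∂μ) := by
        gcongr
        exact abs_integral_pow_le_integral_abs_pow k hf hfk
    _ = 2 ^ k * ∫ ω, |f ω| ^ k ∂μ := by
        rw [← two_mul, ← mul_assoc, ← pow_succ, Nat.sub_add_cancel hk]

end CenteredMoment

/-- With `a = τ₁ p` and `b = (τ₂ - τ₁) p`, the contribution `m` of the urn is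
`urnIncrement a b (X ω) (Y ω)`. -/
def urnIncrement (a b : ℝ) (x y : ℕ) : ℝ :=
  (a + b) * (if x + y = 0 then 1 else 0) - a * (if x = 0 then 1 else 0)

section UrnIncrement

variable {Ω : Type*} {X Y : Ω → ℕ} {a b : ℝ} {k : ℕ}

theorem urnIncrement_comp_eq_indicator_sub_indicator :
    (fun ω ↦ urnIncrement a b (X ω) (Y ω)) = (X ⁻¹' {0} ∩ Y ⁻¹' {0}).indicator (fun _ ↦ b)
      - (X ⁻¹' {0} ∩ Y ⁻¹' {0}ᶜ).indicator (fun _ ↦ a) := by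
  ext ω
  by_cases hx : X ω = 0 <;> by_cases hy : Y ω = 0 <;> simp [urnIncrement, hx, hy]

theorem abs_urnIncrement_comp_pow_eq_indicator_add_indicator (hk : k ≠ 0) :
    (fun ω ↦ |urnIncrement a b (X ω) (Y ω)| ^ k)
      = (X ⁻¹' {0} ∩ Y ⁻¹' {0}).indicator (fun _ ↦ |b| ^ k)
        + (X ⁻¹' {0} ∩ Y ⁻¹' {0}ᶜ).indicator (fun _ ↦ |a| ^ k) := by
  ext ω
  by_cases hx : X ω = 0 <;> by_cases hy : Y ω = 0 <;> simp [urnIncrement, hx, hy, hk]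

variable [MeasurableSpace Ω] {P : Measure Ω}

theorem integrable_urnIncrement_comp [IsFiniteMeasure P] (hX : Measurable X)
    (hY : Measurable Y) : Integrable (fun ω ↦ urnIncrement a b (X ω) (Y ω)) P := by
  have hS := hX (measurableSet_singleton 0)
  have hT := hY (measurableSet_singleton 0)
  rw [urnIncrement_comp_eq_indicator_sub_indicator]
  exact ((integrable_const _).indicator (hS.inter hT)).sub
    ((integrable_const _).indicator (hS.inter hT.compl))

theorem integrable_abs_urnIncrement_comp_pow [IsFiniteMeasure P] (hX : Measurable X)
    (hY : Measurable Y) (hk : k ≠ 0) :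
    Integrable (fun ω ↦ |urnIncrement a b (X ω) (Y ω)| ^ k) P := by
  have hS := hX (measurableSet_singleton 0)
  have hT := hY (measurableSet_singleton 0)
  rw [abs_urnIncrement_comp_pow_eq_indicator_add_indicator hk]
  exact ((integrable_const _).indicator (hS.inter hT)).add
    ((integrable_const _).indicator (hS.inter hT.compl))

theorem integral_abs_urnIncrement_comp_pow [IsProbabilityMeasure P] (hX : Measurable X)
    (hY : Measurable Y) (hXY : IndepFun X Y P) (hk : k ≠ 0) :
    ∫ ω, |urnIncrement a b (X ω) (Y ω)| ^ k ∂P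
      = |b| ^ k * (P.real (X ⁻¹' {0}) * P.real (Y ⁻¹' {0}))
        + |a| ^ k * (P.real (X ⁻¹' {0}) * (1 - P.real (Y ⁻¹' {0}))) := by
  have h0 := measurableSet_singleton (0 : ℕ)
  rw [abs_urnIncrement_comp_pow_eq_indicator_add_indicator hk, integral_add'
      ((integrable_const _).indicator ((hX h0).inter (hY h0)))
      ((integrable_const _).indicator ((hX h0).inter (hY h0.compl))),
    integral_indicator_const _ ((hX h0).inter (hY h0)),
    integral_indicator_const _ ((hX h0).inter (hY h0.compl)),
    hXY.measureReal_inter_preimage_eq_mul h0 h0,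
    hXY.measureReal_inter_preimage_eq_mul h0 h0.compl, Set.preimage_compl,
    probReal_compl_eq_one_sub (hY h0), smul_eq_mul, smul_eq_mul, mul_comm _ (|b| ^ k),
    mul_comm _ (|a| ^ k)]

open Nat in
theorem integral_abs_urnIncrement_comp_pow_le [IsProbabilityMeasure P] (ha : 0 ≤ a) (hb : 0 ≤ b)
    (hk : 1 ≤ k) (hX : Measurable X) (hY : Measurable Y) (hXY : IndepFun X Y P)
    (hPX : P.real (X ⁻¹' {0}) = exp (-a)) (hPY : P.real (Y ⁻¹' {0}) = exp (-b)) :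
    ∫ ω, |urnIncrement a b (X ω) (Y ω)| ^ k ∂P ≤ 2 * k ! * (1 - exp (-b)) := by
  rw [integral_abs_urnIncrement_comp_pow hX hY hXY (by omega), hPX, hPY, abs_of_nonneg ha,
    abs_of_nonneg hb]
  have h_exp_a : exp (-a) ≤ 1 := exp_le_one_iff.2 (by linarith)
  have h_exp_b : exp (-b) ≤ 1 := exp_le_one_iff.2 (by linarith)
  have h_a : a ^ k * exp (-a) ≤ k ! :=
    (pow_mul_exp_neg_le_factorial_mul_one_sub_exp_neg hk ha).trans
      (mul_le_of_le_one_right (by positivity) (by linarith [exp_pos (-a)]))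
  calc b ^ k * (exp (-a) * exp (-b)) + a ^ k * (exp (-a) * (1 - exp (-b)))
      = exp (-a) * (b ^ k * exp (-b)) + a ^ k * exp (-a) * (1 - exp (-b)) := by ring
    _ ≤ 1 * (k ! * (1 - exp (-b))) + k ! * (1 - exp (-b)) :=
        add_le_add (mul_le_mul h_exp_a (pow_mul_exp_neg_le_factorial_mul_one_sub_exp_neg hk hb)
          (by positivity) zero_le_one) (mul_le_mul_of_nonneg_right h_a (by linarith))
    _ = 2 * k ! * (1 - exp (-b)) := by ring

end UrnIncrement

/-- Inequality (5) of the paper: if `X ~ Poisson(τ₁ p)` and `Y ~ Poisson((τ₂ − τ₁) p)` are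
independent and `m = τ₂ p 1{X + Y = 0} − τ₁ p 1{X = 0}`, then for every `k ≥ 1`,
`E|m − Em|^k ≤ 4^k k! P(Y > 0) = 4^k k! (1 − e^{−(τ₂ − τ₁) p})`. -/
theorem missing_mass_single_urn_moment_bound
    {Ω : Type*} [MeasurableSpace Ω] (P : Measure Ω) [IsProbabilityMeasure P]
    (p τ₁ τ₂ : ℝ) (hp : 0 < p) (hτ₁ : 0 ≤ τ₁) (hτ : τ₁ ≤ τ₂)
    (X Y : Ω → ℕ) (hX_meas : Measurable X) (hY_meas : Measurable Y)
    (h_indep : IndepFun X Y P)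
    (hX : ∀ k : ℕ, (P {ω | X ω = k}).toReal
      = Real.exp (-(τ₁ * p)) * (τ₁ * p) ^ k / k.factorial)
    (hY : ∀ k : ℕ, (P {ω | Y ω = k}).toReal
      = Real.exp (-((τ₂ - τ₁) * p)) * ((τ₂ - τ₁) * p) ^ k / k.factorial)
    (m : Ω → ℝ)
    (hm : ∀ ω, m ω = τ₂ * p * (if X ω + Y ω = 0 then (1 : ℝ) else 0)
      - τ₁ * p * (if X ω = 0 then (1 : ℝ) else 0)) :
    ∀ k : ℕ, 1 ≤ k →
      (∫ ω, |m ω - ∫ ω', m ω' ∂P| ^ k ∂P)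
          ≤ (4 : ℝ) ^ k * (k.factorial : ℝ) * (P {ω | 0 < Y ω}).toReal ∧
      (4 : ℝ) ^ k * (k.factorial : ℝ) * (P {ω | 0 < Y ω}).toReal
          = (4 : ℝ) ^ k * (k.factorial : ℝ) * (1 - Real.exp (-((τ₂ - τ₁) * p))) := by
  intro k hk
  have hPX : P.real (X ⁻¹' {0}) = exp (-(τ₁ * p)) := (hX 0).trans (by simp)
  have hPY : P.real (Y ⁻¹' {0}) = exp (-((τ₂ - τ₁) * p)) := (hY 0).trans (by simp)
  have hPY_pos : (P {ω | 0 < Y ω}).toReal = 1 - exp (-((τ₂ - τ₁) * p)) := by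
    have h_set : {ω | 0 < Y ω} = (Y ⁻¹' {0})ᶜ := by ext; simp [Nat.pos_iff_ne_zero]
    rw [h_set, ← hPY]
    exact probReal_compl_eq_one_sub (hY_meas (measurableSet_singleton 0))
  have hm_eq : m = fun ω ↦ urnIncrement (τ₁ * p) ((τ₂ - τ₁) * p) (X ω) (Y ω) := by
    ext ω
    rw [hm, urnIncrement]
    ring
  subst hm_eq
  refine ⟨?_, by rw [hPY_pos]⟩
  calc _ ≤ 2 ^ k * ∫ ω, |urnIncrement (τ₁ * p) ((τ₂ - τ₁) * p) (X ω) (Y ω)| ^ k ∂P :=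
        integral_abs_sub_integral_pow_le hk (integrable_urnIncrement_comp hX_meas hY_meas)
          (integrable_abs_urnIncrement_comp_pow hX_meas hY_meas (by omega))
    _ ≤ 2 ^ k * (2 * k.factorial * (P {ω | 0 < Y ω}).toReal) := by
        rw [hPY_pos]
        gcongr
        exact integral_abs_urnIncrement_comp_pow_le (by positivity)
          (mul_nonneg (sub_nonneg.2 hτ) hp.le) hk hX_meas hY_meas h_indep hPX hPY
    _ ≤ 4 ^ k * k.factorial * (P {ω | 0 < Y ω}).toReal := by
        rw [← mul_assoc, ← mul_assoc, show (4 : ℝ) = 2 * 2 by norm_num, mul_pow]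
        gcongr
        exact le_self_pow₀ (by norm_num) (by omega)
end

section
/- Let 0 ≤ τ₁ ≤ τ₂, and let (X_i)_{i≥1} and (Y_i)_{i≥1} be ℕ-valued random variables on a probability space, all mutually independent, with X_i Poisson-distributed with parameter τ₁ p_i and Y_i Poisson-distributed with parameter (τ₂ − τ₁) p_i. Set u_i = 1{X_i + Y_i is odd} − 1{X_i is odd}. Then the series Σ_{i≥1} (u_i − E u_i) converges a.s. and in L², and E [ ( Σ_{i≥1} (u_i − E u_i) )² ] ≤ 5 Σ_{i≥1} (1 − e^{−(τ₂ − τ₁) p_i}). -/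
/-!
The increment `uᵢ` vanishes when `Yᵢ = 0` and has absolute value at most `1`, so it is dominated
by the indicator of `{Yᵢ ≠ 0}`, an event of probability `1 - exp (-(τ₂ - τ₁) pᵢ) ≤ (τ₂ - τ₁) pᵢ`,
which is summable. Hence both `E |uᵢ|` and `Var uᵢ` are bounded by that probability. Summable
`L¹` norms give absolute convergence almost surely, while pairwise independence makes the centred
partial sums orthogonal in `L²`, so that `‖∑_{N ≤ i < M} (uᵢ - E uᵢ)‖₂² = ∑_{N ≤ i < M} Var uᵢ`;
Fatou's lemma passes to the limit in `M`. The second moment bound in fact holds with constant `1`.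
-/

open Filter Topology Real MeasureTheory ProbabilityTheory
open scoped ENNReal

section L2

variable {α : Type*} [MeasurableSpace α] {μ : Measure α}

lemma MeasureTheory.MemLp.eLpNorm_two_eq_ofReal_sqrt {f : α → ℝ} (hf : MemLp f 2 μ) :
    eLpNorm f 2 μ = ENNReal.ofReal √(∫ x, f x ^ 2 ∂μ) := by
  rw [hf.eLpNorm_eq_integral_rpow_norm two_ne_zero ENNReal.ofNat_ne_top, Real.sqrt_eq_rpow]
  norm_num [Real.norm_eq_abs, sq_abs]

lemma MeasureTheory.eLpNorm_le_of_tendsto_ae {E : Type*} [NormedAddCommGroup E] {p : ℝ≥0∞}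
    {f : ℕ → α → E} {g : α → E} (hf : ∀ n, AEStronglyMeasurable (f n) μ)
    (hlim : ∀ᵐ x ∂μ, Tendsto (fun n => f n x) atTop (𝓝 (g x))) {c : ℝ≥0∞}
    (hc : ∀ᶠ n in atTop, eLpNorm (f n) p μ ≤ c) :
    eLpNorm g p μ ≤ c :=
  (Lp.eLpNorm_lim_le_liminf_eLpNorm hf g hlim).trans (liminf_le_of_frequently_le' hc.frequently)

end L2

section CenteredSeries

variable {Ω : Type*} [MeasurableSpace Ω] {P : Measure Ω} [IsProbabilityMeasure P]
  {u : ℕ → Ω → ℝ}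

lemma ae_summable_sub_integral_of_tsum_eLpNorm_ne_top (hu : ∀ i, AEStronglyMeasurable (u i) P)
    (hL1 : ∑' i, eLpNorm (u i) 1 P ≠ ∞) :
    ∀ᵐ ω ∂P, Summable fun i => u i ω - P[u i] := by
  have hcentered : ∀ i, eLpNorm (u i - fun _ => P[u i]) 1 P ≤ 2 * eLpNorm (u i) 1 P := by
    intro i
    have hconst : eLpNorm (fun _ => P[u i]) 1 P ≤ eLpNorm (u i) 1 P := by
      rw [eLpNorm_const _ one_ne_zero (NeZero.ne P), eLpNorm_one_eq_lintegral_enorm]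
      simpa using enorm_integral_le_lintegral_enorm (u i)
    refine (eLpNorm_sub_le (hu i) aestronglyMeasurable_const le_rfl).trans ?_
    rw [two_mul]
    gcongr
  have hsum : ∑' i, eLpNorm (u i - fun _ => P[u i]) 1 P ≠ ∞ := by
    refine ne_top_of_le_ne_top ?_ (ENNReal.tsum_le_tsum hcentered)
    rw [ENNReal.tsum_mul_left]
    exact ENNReal.mul_ne_top ENNReal.ofNat_ne_top hL1
  filter_upwards [summable_norm_of_tsum_eLpNorm_ne_top le_rfl
    (fun i => (hu i).sub aestronglyMeasurable_const) hsum] with ω hω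
  exact hω.of_norm

lemma integral_sq_sum_sub_integral (hu : ∀ i, MemLp (u i) 2 P)
    (hind : Pairwise fun i j => u i ⟂ᵢ[P] u j) (s : Finset ℕ) :
    ∫ ω, (∑ i ∈ s, (u i ω - P[u i])) ^ 2 ∂P = ∑ i ∈ s, Var[u i; P] := by
  rw [← IndepFun.variance_sum (fun i _ => hu i) (fun i _ j _ hij => hind hij),
    variance_eq_integral (Finset.aemeasurable_sum _ fun i _ => (hu i).aemeasurable)]
  simp only [Finset.sum_apply]
  rw [integral_finsetSum _ fun i _ => (hu i).integrable one_le_two]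
  simp only [Finset.sum_sub_distrib]

lemma eLpNorm_sum_sub_integral (hu : ∀ i, MemLp (u i) 2 P)
    (hind : Pairwise fun i j => u i ⟂ᵢ[P] u j) (s : Finset ℕ) :
    eLpNorm (fun ω => ∑ i ∈ s, (u i ω - P[u i])) 2 P
      = ENNReal.ofReal √(∑ i ∈ s, Var[u i; P]) := by
  have hmem : MemLp (fun ω => ∑ i ∈ s, (u i ω - P[u i])) 2 P :=
    memLp_finsetSum s fun i _ => (hu i).sub (memLp_const _)
  rw [← integral_sq_sum_sub_integral hu hind, hmem.eLpNorm_two_eq_ofReal_sqrt]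

lemma tendsto_eLpNorm_sum_range_sub_tsum (hu : ∀ i, MemLp (u i) 2 P)
    (hind : Pairwise fun i j => u i ⟂ᵢ[P] u j) (hvar : Summable fun i => Var[u i; P])
    (hsum : ∀ᵐ ω ∂P, Summable fun i => u i ω - P[u i]) :
    Tendsto (fun N => eLpNorm
      (fun ω => ∑ i ∈ Finset.range N, (u i ω - P[u i]) - ∑' i, (u i ω - P[u i])) 2 P)
      atTop (𝓝 0) := by
  set F : ℕ → Ω → ℝ := fun N ω => ∑ i ∈ Finset.range N, (u i ω - P[u i])
  have hF : ∀ N, AEStronglyMeasurable (F N) P := fun N =>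
    (memLp_finsetSum _ fun i _ => (hu i).sub (memLp_const _)).aestronglyMeasurable
  have htail : ∀ N, eLpNorm (fun ω => F N ω - ∑' i, (u i ω - P[u i])) 2 P
      ≤ ENNReal.ofReal √(∑' k, Var[u (k + N); P]) := by
    intro N
    refine eLpNorm_le_of_tendsto_ae (fun M => (hF N).sub (hF M)) ?_
      ((eventually_ge_atTop N).mono fun M hM => ?_)
    · filter_upwards [hsum] with ω hω
      exact tendsto_const_nhds.sub hω.hasSum.tendsto_sum_nat
    · have hdiff : F N - F M = -fun ω => ∑ i ∈ Finset.Ico N M, (u i ω - P[u i]) := by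
        ext ω
        simp only [F, ← Finset.sum_range_add_sum_Ico _ hM, Pi.sub_apply, Pi.neg_apply]
        ring
      rw [hdiff, eLpNorm_neg, eLpNorm_sum_sub_integral hu hind, Finset.sum_Ico_eq_sum_range]
      gcongr
      simp_rw [add_comm N]
      exact ((summable_nat_add_iff N).2 hvar).sum_le_tsum _ fun k _ => variance_nonneg _ _
  have hlim : Tendsto (fun N => ENNReal.ofReal √(∑' k, Var[u (k + N); P])) atTop (𝓝 0) := by
    simpa using ENNReal.tendsto_ofReal
      ((Real.continuous_sqrt.tendsto 0).comp (tendsto_sum_nat_add fun i => Var[u i; P]))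
  exact tendsto_of_tendsto_of_tendsto_of_le_of_le tendsto_const_nhds hlim (fun _ => zero_le)
    htail

lemma integral_sq_tsum_sub_integral_le (hu : ∀ i, MemLp (u i) 2 P)
    (hind : Pairwise fun i j => u i ⟂ᵢ[P] u j) (hvar : Summable fun i => Var[u i; P])
    (hsum : ∀ᵐ ω ∂P, Summable fun i => u i ω - P[u i]) :
    ∫ ω, (∑' i, (u i ω - P[u i])) ^ 2 ∂P ≤ ∑' i, Var[u i; P] := by
  set F : ℕ → Ω → ℝ := fun N ω => ∑ i ∈ Finset.range N, (u i ω - P[u i])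
  have hF : ∀ N, AEStronglyMeasurable (F N) P := fun N =>
    (memLp_finsetSum _ fun i _ => (hu i).sub (memLp_const _)).aestronglyMeasurable
  have hlim : ∀ᵐ ω ∂P, Tendsto (fun N => F N ω) atTop (𝓝 (∑' i, (u i ω - P[u i]))) := by
    filter_upwards [hsum] with ω hω
    exact hω.hasSum.tendsto_sum_nat
  have hnorm : eLpNorm (fun ω => ∑' i, (u i ω - P[u i])) 2 P
      ≤ ENNReal.ofReal √(∑' i, Var[u i; P]) := by
    refine eLpNorm_le_of_tendsto_ae hF hlim (Eventually.of_forall fun N => ?_)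
    rw [eLpNorm_sum_sub_integral hu hind]
    gcongr
    exact hvar.sum_le_tsum _ fun i _ => variance_nonneg _ _
  have hmem : MemLp (fun ω => ∑' i, (u i ω - P[u i])) 2 P :=
    ⟨aestronglyMeasurable_of_tendsto_ae atTop hF hlim, hnorm.trans_lt ENNReal.ofReal_lt_top⟩
  rwa [hmem.eLpNorm_two_eq_ofReal_sqrt, ENNReal.ofReal_le_ofReal_iff (Real.sqrt_nonneg _),
    Real.sqrt_le_sqrt_iff (tsum_nonneg fun i => variance_nonneg _ _)] at hnorm

end CenteredSeries

section DominatedByIndicator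

variable {Ω : Type*} [MeasurableSpace Ω] {μ : Measure Ω} {f : Ω → ℝ} {A : Set Ω}

lemma eLpNorm_one_le_measure_of_abs_le_indicator (hA : MeasurableSet A)
    (hf : ∀ ω, |f ω| ≤ A.indicator 1 ω) : eLpNorm f 1 μ ≤ μ A := by
  rw [eLpNorm_one_eq_lintegral_enorm, ← lintegral_indicator_one hA]
  refine lintegral_mono fun ω => ?_
  rw [← ofReal_norm, Real.norm_eq_abs]
  refine (ENNReal.ofReal_le_ofReal (hf ω)).trans ?_
  by_cases hω : ω ∈ A <;> simp [hω]

lemma variance_le_measureReal_of_abs_le_indicator [IsProbabilityMeasure μ]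
    (hfm : AEStronglyMeasurable f μ) (hA : MeasurableSet A)
    (hf : ∀ ω, |f ω| ≤ A.indicator 1 ω) : Var[f; μ] ≤ μ.real A := by
  have hsq : ∀ ω, f ω ^ 2 ≤ A.indicator 1 ω := by
    intro ω
    have hle := hf ω
    by_cases hω : ω ∈ A <;> simp [hω] at hle ⊢
    · nlinarith [abs_nonneg (f ω), sq_abs (f ω)]
    · exact hle
  calc Var[f; μ] ≤ μ[f ^ 2] := variance_le_expectation_sq hfm
    _ ≤ ∫ ω, A.indicator 1 ω ∂μ :=
        integral_mono_of_nonneg (f := f ^ 2) (ae_of_all _ fun ω => sq_nonneg (f ω))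
          ((integrable_const 1).indicator hA) (ae_of_all _ hsq)
    _ = μ.real A := integral_indicator_one hA

variable [IsProbabilityMeasure μ] {u : ℕ → Ω → ℝ} {A : ℕ → Set Ω}

theorem ae_summable_tendsto_eLpNorm_integral_sq_le_of_abs_le_indicator
    (hu : ∀ i, AEStronglyMeasurable (u i) μ) (hind : Pairwise fun i j => u i ⟂ᵢ[μ] u j)
    (hA : ∀ i, MeasurableSet (A i)) (hbound : ∀ i ω, |u i ω| ≤ (A i).indicator 1 ω)
    (hsumA : Summable fun i => μ.real (A i)) :
    (∀ᵐ ω ∂μ, Summable fun i => u i ω - μ[u i]) ∧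
    Tendsto (fun N => eLpNorm
      (fun ω => ∑ i ∈ Finset.range N, (u i ω - μ[u i]) - ∑' i, (u i ω - μ[u i])) 2 μ)
      atTop (𝓝 0) ∧
    ∫ ω, (∑' i, (u i ω - μ[u i])) ^ 2 ∂μ ≤ ∑' i, μ.real (A i) := by
  have hmem : ∀ i, MemLp (u i) 2 μ := fun i => .of_bound (hu i) 1 (ae_of_all _ fun ω =>
    (hbound i ω).trans (Set.indicator_le_self' (fun _ _ => zero_le_one) ω))
  have hvar_le : ∀ i, Var[u i; μ] ≤ μ.real (A i) := fun i =>
    variance_le_measureReal_of_abs_le_indicator (hu i) (hA i) (hbound i)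
  have hvar := hsumA.of_nonneg_of_le (fun i => variance_nonneg _ _) hvar_le
  have hL1 : ∑' i, eLpNorm (u i) 1 μ ≠ ∞ := by
    refine ne_top_of_le_ne_top ?_ (ENNReal.tsum_le_tsum fun i =>
      eLpNorm_one_le_measure_of_abs_le_indicator (hA i) (hbound i))
    rw [tsum_congr fun i => (ofReal_measureReal (μ := μ) (s := A i)).symm,
      ← ENNReal.ofReal_tsum_of_nonneg (fun i => measureReal_nonneg) hsumA]
    exact ENNReal.ofReal_ne_top
  have hsum := ae_summable_sub_integral_of_tsum_eLpNorm_ne_top hu hL1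
  exact ⟨hsum, tendsto_eLpNorm_sum_range_sub_tsum hmem hind hvar hsum,
    (integral_sq_tsum_sub_integral_le hmem hind hvar hsum).trans
      (hvar.tsum_le_tsum hvar_le hsumA)⟩

end DominatedByIndicator

lemma ProbabilityTheory.iIndepFun.pairwise_indepFun_comp_sumElim {Ω ι α γ : Type*}
    [MeasurableSpace Ω] {P : Measure Ω} [MeasurableSpace α] [MeasurableSpace γ]
    {X Y : ι → Ω → α} (h : iIndepFun (Sum.elim X Y) P) (hX : ∀ i, Measurable (X i))
    (hY : ∀ i, Measurable (Y i)) {g : α × α → γ} (hg : Measurable g) :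
    Pairwise fun i j => (fun ω => g (X i ω, Y i ω)) ⟂ᵢ[P] (fun ω => g (X j ω, Y j ω)) := by
  intro i j hij
  have hXY : ∀ k, Measurable (Sum.elim X Y k) := by
    rintro (k | k)
    exacts [hX k, hY k]
  have := h.indepFun_prodMk_prodMk hXY (.inl i) (.inr i) (.inl j) (.inr j)
    (by simp [hij]) (by simp) (by simp) (by simp [hij])
  exact this.comp hg hg

def oddIncrement (x y : ℕ) : ℝ := (if Odd (x + y) then 1 else 0) - (if Odd x then 1 else 0)

lemma measurable_oddIncrement : Measurable (Function.uncurry oddIncrement) :=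
  measurable_of_countable _

lemma abs_oddIncrement_le_indicator (x y : ℕ) :
    |oddIncrement x y| ≤ ({0}ᶜ : Set ℕ).indicator 1 y := by
  rcases eq_or_ne y 0 with rfl | hy
  · simp [oddIncrement]
  · simp only [oddIncrement, Set.indicator_of_mem (Set.mem_compl_singleton_iff.2 hy),
      Pi.one_apply]
    split_ifs <;> norm_num

theorem odd_occupancy_increment_variance_bound_general
    {Ω : Type*} [MeasurableSpace Ω] (P : Measure Ω) [IsProbabilityMeasure P]
    (p : ℕ → ℝ) (hp_sum : ∑' i, p i = 1)
    (τ₁ τ₂ : ℝ)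
    (X Y : ℕ → Ω → ℕ) (hX_meas : ∀ i, Measurable (X i)) (hY_meas : ∀ i, Measurable (Y i))
    (h_indep : iIndepFun (Sum.elim X Y) P)
    (hY : ∀ i, ∀ k : ℕ, (P {ω | Y i ω = k}).toReal
      = Real.exp (-((τ₂ - τ₁) * p i)) * ((τ₂ - τ₁) * p i) ^ k / k.factorial)
    (u : ℕ → Ω → ℝ)
    (hu : ∀ i ω, u i ω = (if Odd (X i ω + Y i ω) then (1 : ℝ) else 0)
      - (if Odd (X i ω) then (1 : ℝ) else 0))
    (S : Ω → ℝ) (hS : ∀ ω, S ω = ∑' i, (u i ω - ∫ ω', u i ω' ∂P)) :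
    (∀ᵐ ω ∂P, Summable fun i => u i ω - ∫ ω', u i ω' ∂P) ∧
    Tendsto (fun N => eLpNorm
        (fun ω => (∑ i ∈ Finset.range N, (u i ω - ∫ ω', u i ω' ∂P)) - S ω) 2 P)
      atTop (𝓝 0) ∧
    (∫ ω, (S ω) ^ 2 ∂P) ≤ 5 * ∑' i, (1 - Real.exp (-((τ₂ - τ₁) * p i))) := by
  obtain rfl : u = fun i ω => oddIncrement (X i ω) (Y i ω) := funext fun i => funext (hu i)
  obtain rfl := funext hS
  have hA : ∀ i, MeasurableSet (Y i ⁻¹' {0}ᶜ) := fun i =>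
    hY_meas i (measurableSet_singleton 0).compl
  have hPA : ∀ i, P.real (Y i ⁻¹' {0}ᶜ) = 1 - exp (-((τ₂ - τ₁) * p i)) := fun i => by
    have h0 : (P (Y i ⁻¹' {0})).toReal = exp (-((τ₂ - τ₁) * p i)) := (hY i 0).trans (by simp)
    rw [Set.preimage_compl, probReal_compl_eq_one_sub (hY_meas i (measurableSet_singleton 0)),
      measureReal_def, h0]
  have hp : Summable p := by
    by_contra h
    simp [tsum_eq_zero_of_not_summable h] at hp_sum
  have hsumA : Summable fun i => P.real (Y i ⁻¹' {0}ᶜ) :=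
    .of_nonneg_of_le (fun i => measureReal_nonneg)
      (fun i => (hPA i).trans_le (by linarith [one_sub_le_exp_neg ((τ₂ - τ₁) * p i)]))
      (hp.mul_left (τ₂ - τ₁))
  obtain ⟨hsum, hL2, hsq⟩ := ae_summable_tendsto_eLpNorm_integral_sq_le_of_abs_le_indicator
    (fun i => (measurable_oddIncrement.comp ((hX_meas i).prodMk (hY_meas i))).aestronglyMeasurable)
    (h_indep.pairwise_indepFun_comp_sumElim hX_meas hY_meas measurable_oddIncrement) hA
    (fun i ω => (abs_oddIncrement_le_indicator _ _).trans_eq (Set.indicator_comp_right (Y i)).symm)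
    hsumA
  refine ⟨hsum, hL2, hsq.trans ?_⟩
  have hnonneg : 0 ≤ ∑' i, P.real (Y i ⁻¹' {0}ᶜ) := tsum_nonneg fun i => measureReal_nonneg
  simp_rw [← hPA]
  linarith

/-- Variance bound for the increment of the odd-occupancy process: with
`u_i = 1{X_i + Y_i odd} − 1{X_i odd}` formed from mutually independent
`X_i ~ Poisson(τ₁ p_i)`, `Y_i ~ Poisson((τ₂ − τ₁) p_i)`, the series
`∑_i (u_i − E u_i)` converges a.s. and in `L²`, and its second moment is at most
`5 ∑_i (1 − e^{−(τ₂ − τ₁) p_i})`. -/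
theorem odd_occupancy_increment_variance_bound
    {Ω : Type*} [MeasurableSpace Ω] (P : Measure Ω) [IsProbabilityMeasure P]
    (p : ℕ → ℝ) (hp_pos : ∀ i, 0 < p i) (hp_sum : ∑' i, p i = 1)
    (τ₁ τ₂ : ℝ) (hτ₁ : 0 ≤ τ₁) (hτ : τ₁ ≤ τ₂)
    (X Y : ℕ → Ω → ℕ) (hX_meas : ∀ i, Measurable (X i)) (hY_meas : ∀ i, Measurable (Y i))
    (h_indep : iIndepFun (Sum.elim X Y) P)
    (hX : ∀ i, ∀ k : ℕ, (P {ω | X i ω = k}).toReal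
      = Real.exp (-(τ₁ * p i)) * (τ₁ * p i) ^ k / k.factorial)
    (hY : ∀ i, ∀ k : ℕ, (P {ω | Y i ω = k}).toReal
      = Real.exp (-((τ₂ - τ₁) * p i)) * ((τ₂ - τ₁) * p i) ^ k / k.factorial)
    (u : ℕ → Ω → ℝ)
    (hu : ∀ i ω, u i ω = (if Odd (X i ω + Y i ω) then (1 : ℝ) else 0)
      - (if Odd (X i ω) then (1 : ℝ) else 0))
    (S : Ω → ℝ) (hS : ∀ ω, S ω = ∑' i, (u i ω - ∫ ω', u i ω' ∂P)) :
    (∀ᵐ ω ∂P, Summable fun i => u i ω - ∫ ω', u i ω' ∂P) ∧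
    Tendsto (fun N => eLpNorm
        (fun ω => (∑ i ∈ Finset.range N, (u i ω - ∫ ω', u i ω' ∂P)) - S ω) 2 P)
      atTop (𝓝 0) ∧
    (∫ ω, (S ω) ^ 2 ∂P) ≤ 5 * ∑' i, (1 - Real.exp (-((τ₂ - τ₁) * p i))) :=
  odd_occupancy_increment_variance_bound_general P p hp_sum τ₁ τ₂ X Y hX_meas hY_meas h_indep hY u
    hu S hS
end

section
/- Let 0 < τ ≤ t, and let (X_k)_{k≥1} and (Y_k)_{k≥1} be ℕ-valued random variables, all mutually independent, with X_k Poisson-distributed with parameter p_k τ and Y_k Poisson-distributed with parameter p_k (t − τ). Set M_τ = Σ_{k≥1} τ p_k · 1{X_k = 0} and M_t = Σ_{k≥1} t p_k · 1{X_k + Y_k = 0} (both series converge absolutely a.s. and define square-integrable random variables). Then Cov(M_τ, M_t) = Σ_{k≥1} t τ p_k² e^{−t p_k} (1 − e^{−τ p_k}). -/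
/-!
With `A_k = {X_k = 0}` and `B_k = {Y_k = 0}`, both processes are series of weighted indicators,
`M_τ = ∑ τ p_k 1_{A_k}` and `M_t = ∑ t p_k 1_{A_k ∩ B_k}`, with summable weights. Hence they are
bounded, and by dominated convergence the covariance passes through both series. For `k ≠ l` the
events `A_k` and `A_l ∩ B_l` are independent, so only the diagonal survives; there
`A_k ∩ (A_k ∩ B_k) = A_k ∩ B_k` gives `Cov = τ t p_k² P(A_k) P(B_k) (1 - P(A_k))`, and
`P(A_k) P(B_k) = e^{-τ p_k} e^{-(t-τ) p_k} = e^{-t p_k}`.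
-/

open Filter Topology Real MeasureTheory ProbabilityTheory

section TsumOfBounded

variable {Ω : Type*} [MeasurableSpace Ω] {μ : Measure Ω} {F : ℕ → Ω → ℝ} {a : ℕ → ℝ}

lemma aestronglyMeasurable_tsum_of_norm_le (hF : ∀ i, AEStronglyMeasurable (F i) μ)
    (hFa : ∀ i ω, ‖F i ω‖ ≤ a i) (ha : Summable a) :
    AEStronglyMeasurable (fun ω => ∑' i, F i ω) μ :=
  aestronglyMeasurable_of_tendsto_ae atTop
    (fun n => Finset.aestronglyMeasurable_fun_sum (Finset.range n) fun i _ => hF i)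
    (ae_of_all _ fun ω => (ha.of_norm_bounded (hFa · ω)).hasSum.tendsto_sum_nat)

lemma memLp_top_tsum_of_norm_le (hF : ∀ i, AEStronglyMeasurable (F i) μ)
    (hFa : ∀ i ω, ‖F i ω‖ ≤ a i) (ha : Summable a) :
    MemLp (fun ω => ∑' i, F i ω) ⊤ μ :=
  memLp_top_of_bound (aestronglyMeasurable_tsum_of_norm_le hF hFa ha) (∑' i, a i)
    (ae_of_all _ fun ω => tsum_of_norm_bounded ha.hasSum (hFa · ω))

lemma hasSum_integral_mul_of_norm_le (hF : ∀ i, AEStronglyMeasurable (F i) μ)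
    (hFa : ∀ i ω, ‖F i ω‖ ≤ a i) (ha : Summable a) {Z : Ω → ℝ} (hZ : Integrable Z μ) :
    HasSum (fun i => ∫ ω, F i ω * Z ω ∂μ) (∫ ω, (∑' i, F i ω) * Z ω ∂μ) := by
  simp_rw [← tsum_mul_right]
  refine hasSum_integral_of_summable_integral_norm
    (fun i => hZ.bdd_mul (hF i) (ae_of_all _ (hFa i))) ?_
  refine (ha.mul_right (∫ ω, ‖Z ω‖ ∂μ)).of_nonneg_of_le
    (fun i => integral_nonneg fun ω => norm_nonneg _) fun i => ?_
  rw [← integral_const_mul]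
  refine integral_mono_of_nonneg (ae_of_all _ fun ω => norm_nonneg _) (hZ.norm.const_mul _)
    (ae_of_all _ fun ω => (norm_mul _ _).trans_le
      (mul_le_mul_of_nonneg_right (hFa i ω) (norm_nonneg _)))

lemma hasSum_integral_of_norm_le [IsFiniteMeasure μ] (hF : ∀ i, AEStronglyMeasurable (F i) μ)
    (hFa : ∀ i ω, ‖F i ω‖ ≤ a i) (ha : Summable a) :
    HasSum (fun i => ∫ ω, F i ω ∂μ) (∫ ω, ∑' i, F i ω ∂μ) := by
  simpa using hasSum_integral_mul_of_norm_le hF hFa ha (integrable_const (1 : ℝ))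

namespace ProbabilityTheory

lemma covariance_tsum_left [IsProbabilityMeasure μ] (hF : ∀ i, AEStronglyMeasurable (F i) μ)
    (hFa : ∀ i ω, ‖F i ω‖ ≤ a i) (ha : Summable a) {Y : Ω → ℝ} (hY : Integrable Y μ) :
    cov[fun ω => ∑' i, F i ω, Y; μ] = ∑' i, cov[F i, Y; μ] := by
  have hmean : ∀ i, ‖μ[F i]‖ ≤ a i := fun i => by
    simpa using norm_integral_le_of_norm_le_const (μ := μ) (ae_of_all _ (hFa i))
  have hcentered : ∀ ω, ∑' i, F i ω - μ[fun ω => ∑' i, F i ω] = ∑' i, (F i ω - μ[F i]) := by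
    intro ω
    rw [← (hasSum_integral_of_norm_le hF hFa ha).tsum_eq,
      Summable.tsum_sub (ha.of_norm_bounded (hFa · ω)) (ha.of_norm_bounded hmean)]
  simp only [covariance, hcentered]
  refine ((hasSum_integral_mul_of_norm_le (fun i => (hF i).sub aestronglyMeasurable_const)
    (fun i ω => (norm_sub_le _ _).trans (add_le_add (hFa i ω) (hmean i))) (ha.add ha)
    (hY.sub (integrable_const _))).tsum_eq).symm

lemma covariance_tsum_right [IsProbabilityMeasure μ] (hF : ∀ i, AEStronglyMeasurable (F i) μ)
    (hFa : ∀ i ω, ‖F i ω‖ ≤ a i) (ha : Summable a) {X : Ω → ℝ} (hX : Integrable X μ) :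
    cov[X, fun ω => ∑' i, F i ω; μ] = ∑' i, cov[X, F i; μ] := by
  simp_rw [covariance_comm X]
  exact covariance_tsum_left hF hFa ha hX

lemma covariance_tsum_tsum [IsProbabilityMeasure μ] {G : ℕ → Ω → ℝ} {b : ℕ → ℝ}
    (hF : ∀ i, AEStronglyMeasurable (F i) μ) (hFa : ∀ i ω, ‖F i ω‖ ≤ a i) (ha : Summable a)
    (hG : ∀ j, AEStronglyMeasurable (G j) μ) (hGb : ∀ j ω, ‖G j ω‖ ≤ b j) (hb : Summable b) :
    cov[fun ω => ∑' i, F i ω, fun ω => ∑' j, G j ω; μ] = ∑' i, ∑' j, cov[F i, G j; μ] := by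
  rw [covariance_tsum_left hF hFa ha ((memLp_top_tsum_of_norm_le hG hGb hb).integrable le_top)]
  exact tsum_congr fun i => covariance_tsum_right hG hGb hb
    (Integrable.of_bound (hF i) (a i) (ae_of_all _ (hFa i)))

end ProbabilityTheory

end TsumOfBounded

lemma summable_indicator_const_apply {Ω : Type*} {A : ℕ → Set Ω} {c : ℕ → ℝ} (hc : Summable c)
    (ω : Ω) :
    Summable fun k => (A k).indicator (fun _ => c k) ω :=
  hc.abs.of_norm_bounded fun _ => norm_indicator_le_norm_self _ _

namespace ProbabilityTheory

variable {Ω : Type*} [MeasurableSpace Ω] {μ : Measure Ω}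

lemma covariance_indicator_const [IsProbabilityMeasure μ] {A B : Set Ω} (hA : MeasurableSet A)
    (hB : MeasurableSet B) (c d : ℝ) :
    cov[A.indicator fun _ => c, B.indicator fun _ => d; μ]
      = c * d * (μ.real (A ∩ B) - μ.real A * μ.real B) := by
  rw [covariance_eq_sub (memLp_indicator_const 2 hA c (Or.inr (measure_ne_top _ _)))
    (memLp_indicator_const 2 hB d (Or.inr (measure_ne_top _ _))), Pi.mul_def]
  simp_rw [← Set.inter_indicator_mul]
  rw [integral_indicator_const _ (hA.inter hB), integral_indicator_const _ hA,
    integral_indicator_const _ hB]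
  simp only [smul_eq_mul]
  ring

section IndicatorSeries

variable {A B : ℕ → Set Ω} {c d : ℕ → ℝ}

lemma memLp_top_tsum_indicator_const (hA : ∀ k, MeasurableSet (A k)) (hc : Summable c) :
    MemLp (fun ω => ∑' k, (A k).indicator (fun _ => c k) ω) ⊤ μ :=
  memLp_top_tsum_of_norm_le (fun k => (measurable_const.indicator (hA k)).aestronglyMeasurable)
    (fun _ _ => norm_indicator_le_norm_self _ _) hc.abs

lemma covariance_tsum_indicator_const [IsProbabilityMeasure μ] (hA : ∀ k, MeasurableSet (A k))
    (hB : ∀ k, MeasurableSet (B k)) (hc : Summable c) (hd : Summable d) :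
    cov[fun ω => ∑' k, (A k).indicator (fun _ => c k) ω,
        fun ω => ∑' l, (B l).indicator (fun _ => d l) ω; μ]
      = ∑' k, ∑' l, cov[(A k).indicator fun _ => c k, (B l).indicator fun _ => d l; μ] :=
  covariance_tsum_tsum (fun k => (measurable_const.indicator (hA k)).aestronglyMeasurable)
    (fun _ _ => norm_indicator_le_norm_self _ _) hc.abs
    (fun l => (measurable_const.indicator (hB l)).aestronglyMeasurable)
    (fun _ _ => norm_indicator_le_norm_self _ _) hd.abs

end IndicatorSeries

section SumElim

variable {ι β : Type*} [MeasurableSpace β] {X Y : ι → Ω → β} {s : Set β}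

lemma iIndepFun.measureReal_sumElim_inter (h : iIndepFun (Sum.elim X Y) μ)
    (hs : MeasurableSet s) (k : ι) :
    μ.real (X k ⁻¹' s ∩ Y k ⁻¹' s) = μ.real (X k ⁻¹' s) * μ.real (Y k ⁻¹' s) :=
  (congrArg ENNReal.toReal ((h.indepFun Sum.inl_ne_inr).measure_inter_preimage_eq_mul
    s s hs hs)).trans ENNReal.toReal_mul

lemma iIndepFun.measureReal_sumElim_inter_inter (h : iIndepFun (Sum.elim X Y) μ)
    (hs : MeasurableSet s) {k l : ι} (hkl : k ≠ l) :
    μ.real (X k ⁻¹' s ∩ (X l ⁻¹' s ∩ Y l ⁻¹' s))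
      = μ.real (X k ⁻¹' s) * μ.real (X l ⁻¹' s ∩ Y l ⁻¹' s) := by
  classical
  have hprod := h.measure_inter_preimage_eq_mul {Sum.inl k, Sum.inl l, Sum.inr l}
    (sets := fun _ => s) fun _ _ => hs
  simp only [Finset.mem_insert, Finset.mem_singleton, Set.iInter_iInter_eq_or_left, Sum.elim_inl,
    Set.iInter_iInter_eq_left, Sum.elim_inr, Sum.inl.injEq, hkl, reduceCtorEq, or_self,
    not_false_eq_true, Finset.prod_insert, Finset.prod_singleton] at hprod
  rw [h.measureReal_sumElim_inter hs, measureReal_def, hprod]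
  simp only [ENNReal.toReal_mul, measureReal_def]

variable [IsProbabilityMeasure μ]

lemma iIndepFun.covariance_indicator_sumElim_of_ne (h : iIndepFun (Sum.elim X Y) μ)
    (hX : ∀ k, Measurable (X k)) (hY : ∀ k, Measurable (Y k)) (hs : MeasurableSet s)
    {k l : ι} (hkl : k ≠ l) (c d : ℝ) :
    cov[(X k ⁻¹' s).indicator fun _ => c, (X l ⁻¹' s ∩ Y l ⁻¹' s).indicator fun _ => d; μ]
      = 0 := by
  rw [covariance_indicator_const (hX k hs) ((hX l hs).inter (hY l hs)),
    h.measureReal_sumElim_inter_inter hs hkl, sub_self, mul_zero]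

lemma iIndepFun.covariance_indicator_sumElim_self (h : iIndepFun (Sum.elim X Y) μ)
    (hX : ∀ k, Measurable (X k)) (hY : ∀ k, Measurable (Y k)) (hs : MeasurableSet s)
    (k : ι) (c d : ℝ) :
    cov[(X k ⁻¹' s).indicator fun _ => c, (X k ⁻¹' s ∩ Y k ⁻¹' s).indicator fun _ => d; μ]
      = c * d * μ.real (X k ⁻¹' s) * μ.real (Y k ⁻¹' s) * (1 - μ.real (X k ⁻¹' s)) := by
  rw [covariance_indicator_const (hX k hs) ((hX k hs).inter (hY k hs)), ← Set.inter_assoc,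
    Set.inter_self, h.measureReal_sumElim_inter hs]
  ring

end SumElim

end ProbabilityTheory

theorem covariance_missing_mass_general
    {Ω : Type*} [MeasurableSpace Ω] (P : Measure Ω) [IsProbabilityMeasure P]
    (p : ℕ → ℝ) (hp_sum : ∑' k, p k = 1)
    (τ t : ℝ)
    (X Y : ℕ → Ω → ℕ) (hX_meas : ∀ k, Measurable (X k)) (hY_meas : ∀ k, Measurable (Y k))
    (h_indep : iIndepFun (Sum.elim X Y) P)
    (hX : ∀ k, ∀ j : ℕ, (P {ω | X k ω = j}).toReal
      = Real.exp (-(p k * τ)) * (p k * τ) ^ j / j.factorial)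
    (hY : ∀ k, ∀ j : ℕ, (P {ω | Y k ω = j}).toReal
      = Real.exp (-(p k * (t - τ))) * (p k * (t - τ)) ^ j / j.factorial)
    (Mτ Mt : Ω → ℝ)
    (hMτ : ∀ ω, Mτ ω = ∑' k, τ * p k * (if X k ω = 0 then (1 : ℝ) else 0))
    (hMt : ∀ ω, Mt ω = ∑' k, t * p k * (if X k ω + Y k ω = 0 then (1 : ℝ) else 0)) :
    (∀ᵐ ω ∂P, Summable fun k => |τ * p k * (if X k ω = 0 then (1 : ℝ) else 0)|) ∧
    (∀ᵐ ω ∂P, Summable fun k => |t * p k * (if X k ω + Y k ω = 0 then (1 : ℝ) else 0)|) ∧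
    MemLp Mτ 2 P ∧ MemLp Mt 2 P ∧
    (∫ ω, (Mτ ω - ∫ ω', Mτ ω' ∂P) * (Mt ω - ∫ ω', Mt ω' ∂P) ∂P)
      = ∑' k, t * τ * (p k) ^ 2 * Real.exp (-(t * p k))
          * (1 - Real.exp (-(τ * p k))) := by
  have hp : Summable p := by
    by_contra h
    simp [tsum_eq_zero_of_not_summable h] at hp_sum
  have hs : MeasurableSet ({0} : Set ℕ) := measurableSet_singleton 0
  have hA : ∀ k, MeasurableSet (X k ⁻¹' {0}) := fun k => hX_meas k hs
  have hAB : ∀ k, MeasurableSet (X k ⁻¹' {0} ∩ Y k ⁻¹' {0}) := fun k =>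
    (hA k).inter (hY_meas k hs)
  have hMτ_ind : ∀ ω k, τ * p k * (if X k ω = 0 then (1 : ℝ) else 0)
      = (X k ⁻¹' {0}).indicator (fun _ => τ * p k) ω := by
    simp [Set.indicator]
  have hMt_ind : ∀ ω k, t * p k * (if X k ω + Y k ω = 0 then (1 : ℝ) else 0)
      = (X k ⁻¹' {0} ∩ Y k ⁻¹' {0}).indicator (fun _ => t * p k) ω := by
    simp [Set.indicator]
  obtain rfl := funext fun ω => (hMτ ω).trans (tsum_congr (hMτ_ind ω))
  obtain rfl := funext fun ω => (hMt ω).trans (tsum_congr (hMt_ind ω))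
  refine ⟨ae_of_all _ fun ω => ?_, ae_of_all _ fun ω => ?_,
    (memLp_top_tsum_indicator_const hA (hp.mul_left τ)).mono_exponent le_top,
    (memLp_top_tsum_indicator_const hAB (hp.mul_left t)).mono_exponent le_top, ?_⟩
  · simpa only [hMτ_ind ω] using (summable_indicator_const_apply (hp.mul_left τ) ω).abs
  · simpa only [hMt_ind ω] using (summable_indicator_const_apply (hp.mul_left t) ω).abs
  change cov[_, _; P] = _
  rw [covariance_tsum_indicator_const hA hAB (hp.mul_left τ) (hp.mul_left t)]
  refine tsum_congr fun k => ?_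
  have hXk : P.real (X k ⁻¹' {0}) = exp (-(p k * τ)) := by
    simpa [measureReal_def, Set.preimage] using hX k 0
  have hYk : P.real (Y k ⁻¹' {0}) = exp (-(p k * (t - τ))) := by
    simpa [measureReal_def, Set.preimage] using hY k 0
  have hexp : exp (-(p k * τ)) * exp (-(p k * (t - τ))) = exp (-(t * p k)) := by
    rw [← exp_add]; congr 1; ring
  rw [tsum_eq_single k fun l hlk =>
      h_indep.covariance_indicator_sumElim_of_ne hX_meas hY_meas hs (Ne.symm hlk) _ _,
    h_indep.covariance_indicator_sumElim_self hX_meas hY_meas hs, hXk, hYk, mul_comm τ (p k)]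
  linear_combination (p k * τ * (t * p k) * (1 - exp (-(p k * τ)))) * hexp

/-- Covariance of the Poissonized scaled missing mass process at times `τ ≤ t`:
`Cov(M(τ), M(t)) = ∑_k t τ p_k² e^{−t p_k} (1 − e^{−τ p_k})`. -/
theorem covariance_missing_mass
    {Ω : Type*} [MeasurableSpace Ω] (P : Measure Ω) [IsProbabilityMeasure P]
    (p : ℕ → ℝ) (hp_pos : ∀ k, 0 < p k) (hp_sum : ∑' k, p k = 1)
    (τ t : ℝ) (hτ : 0 < τ) (hτt : τ ≤ t)
    (X Y : ℕ → Ω → ℕ) (hX_meas : ∀ k, Measurable (X k)) (hY_meas : ∀ k, Measurable (Y k))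
    (h_indep : iIndepFun (Sum.elim X Y) P)
    (hX : ∀ k, ∀ j : ℕ, (P {ω | X k ω = j}).toReal
      = Real.exp (-(p k * τ)) * (p k * τ) ^ j / j.factorial)
    (hY : ∀ k, ∀ j : ℕ, (P {ω | Y k ω = j}).toReal
      = Real.exp (-(p k * (t - τ))) * (p k * (t - τ)) ^ j / j.factorial)
    (Mτ Mt : Ω → ℝ)
    (hMτ : ∀ ω, Mτ ω = ∑' k, τ * p k * (if X k ω = 0 then (1 : ℝ) else 0))
    (hMt : ∀ ω, Mt ω = ∑' k, t * p k * (if X k ω + Y k ω = 0 then (1 : ℝ) else 0)) :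
    (∀ᵐ ω ∂P, Summable fun k => |τ * p k * (if X k ω = 0 then (1 : ℝ) else 0)|) ∧
    (∀ᵐ ω ∂P, Summable fun k => |t * p k * (if X k ω + Y k ω = 0 then (1 : ℝ) else 0)|) ∧
    MemLp Mτ 2 P ∧ MemLp Mt 2 P ∧
    (∫ ω, (Mτ ω - ∫ ω', Mτ ω' ∂P) * (Mt ω - ∫ ω', Mt ω' ∂P) ∂P)
      = ∑' k, t * τ * (p k) ^ 2 * Real.exp (-(t * p k))
          * (1 - Real.exp (-(τ * p k))) :=
  covariance_missing_mass_general P p hp_sum τ t X Y hX_meas hY_meas h_indep hX hY Mτ Mt hMτ hMt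
end

section
/- Let 0 < τ ≤ t, and let (X_k)_{k≥1} and (Y_k)_{k≥1} be ℕ-valued random variables, all mutually independent, with X_k Poisson-distributed with parameter p_k τ and Y_k Poisson-distributed with parameter p_k (t − τ). Set R_τ = Σ_{k≥1} 1{X_k ≥ 1}, R_t = Σ_{k≥1} 1{X_k + Y_k ≥ 1}, U_τ = Σ_{k≥1} 1{X_k is odd}, U_t = Σ_{k≥1} 1{X_k + Y_k is odd} (all series converge a.s. and define square-integrable random variables). Then Cov(R_τ, U_t) = (1/2) Σ_{k≥1} ( e^{−p_k (2t − τ)} − e^{−p_k (2t + τ)} ) and Cov(R_t, U_τ) = (1/2) Σ_{k≥1} ( e^{−p_k t} − e^{−p_k (2τ + t)} ). -/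
/-!
Each of the four processes counts the indices `k` for which the pair `(X k, Y k)` lies in a fixed
set, and these pairs are independent across `k`. For counts `N_A = ∑ₖ 1_{A k}` and
`N_B = ∑ₖ 1_{B k}` with `∑ₖ P (A k) < ∞`, Tonelli gives
`E[N_A N_B] = ∑_{k,j} P (A k ∩ B j)`, and independence kills the off-diagonal terms of the
covariance, leaving `Cov(N_A, N_B) = ∑ₖ (P (A k ∩ B k) - P (A k) P (B k))`; the same
computation with `A = B` shows that the counts are square integrable.

The diagonal terms are single-box Poisson computations: `P(X odd) = e^{-a} sinh a =
(1 - e^{-2a}) / 2`, parities of independent summands combine, and `{X ≥ 1, X + Y odd}` is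
`{X + Y odd}` minus `{X = 0, Y odd}`. Every event involved lies in `{X k + Y k ≥ 1}`, whose
probability `1 - e^{-p_k t} ≤ p_k t` is summable.
-/

open MeasureTheory ProbabilityTheory Real
open scoped ENNReal Nat

theorem ENNReal.tsum_mul_tsum {ι κ : Type*} (f : ι → ℝ≥0∞) (g : κ → ℝ≥0∞) :
    (∑' i, f i) * ∑' j, g j = ∑' q : ι × κ, f q.1 * g q.2 := by
  rw [ENNReal.tsum_prod', ← ENNReal.tsum_mul_right]
  simp_rw [← ENNReal.tsum_mul_left]

section EventCount

variable {Ω ι : Type*} {A B : ι → Set Ω}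

-- Valued in `ℝ≥0∞`, where the series always converges and Tonelli's theorem applies.
noncomputable def eventCount (A : ι → Set Ω) (ω : Ω) : ℝ≥0∞ :=
  ∑' k, (A k).indicator 1 ω

lemma eventCount_mul_eventCount (ω : Ω) :
    eventCount A ω * eventCount B ω = eventCount (fun q : ι × ι => A q.1 ∩ B q.2) ω := by
  simp_rw [eventCount, ENNReal.tsum_mul_tsum, Set.inter_indicator_one, Pi.mul_apply]

lemma toReal_eventCount (ω : Ω) :
    (eventCount A ω).toReal = ∑' k, (A k).indicator 1 ω := by
  rw [eventCount, ENNReal.tsum_toReal_eq fun k => by by_cases h : ω ∈ A k <;> simp [h]]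
  refine tsum_congr fun k => ?_
  by_cases h : ω ∈ A k <;> simp [h]

variable [MeasurableSpace Ω] {μ : Measure Ω}

lemma tsum_measure_inter_ne_top (hAB : ∀ k j, k ≠ j → μ (A k ∩ B j) = μ (A k) * μ (B j))
    (hA : ∑' k, μ (A k) ≠ ∞) (hB : ∑' k, μ (B k) ≠ ∞) :
    ∑' q : ι × ι, μ (A q.1 ∩ B q.2) ≠ ∞ := by
  classical
  have hle : ∀ q : ι × ι, μ (A q.1 ∩ B q.2)
      ≤ μ (A q.1) * μ (B q.2) + if q.2 = q.1 then μ (B q.1) else 0 := by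
    rintro ⟨k, j⟩
    by_cases h : j = k
    · subst h
      simpa using le_add_left (measure_mono Set.inter_subset_right)
    · simp [hAB k j (Ne.symm h), h]
  refine ne_top_of_le_ne_top ?_ (ENNReal.tsum_le_tsum hle)
  rw [ENNReal.tsum_add, ← ENNReal.tsum_mul_tsum (fun k => μ (A k)) (fun k => μ (B k)),
    ENNReal.tsum_prod']
  simpa using ⟨ENNReal.mul_ne_top hA hB, hB⟩

variable [Countable ι]

lemma measurable_eventCount (hA : ∀ k, MeasurableSet (A k)) : Measurable (eventCount A) :=
  Measurable.tsum fun k => measurable_one.indicator (hA k)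

lemma lintegral_eventCount (hA : ∀ k, MeasurableSet (A k)) :
    ∫⁻ ω, eventCount A ω ∂μ = ∑' k, μ (A k) := by
  simp_rw [eventCount, lintegral_tsum fun k => (measurable_one.indicator (hA k)).aemeasurable,
    lintegral_indicator_one (hA _)]

lemma ae_eventCount_lt_top (hA : ∀ k, MeasurableSet (A k)) (hfin : ∑' k, μ (A k) ≠ ∞) :
    ∀ᵐ ω ∂μ, eventCount A ω < ∞ :=
  ae_lt_top (measurable_eventCount hA) (lintegral_eventCount hA ▸ hfin)

lemma ae_summable_indicator (hA : ∀ k, MeasurableSet (A k)) (hfin : ∑' k, μ (A k) ≠ ∞) :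
    ∀ᵐ ω ∂μ, Summable fun k => (A k).indicator (1 : Ω → ℝ) ω := by
  filter_upwards [ae_eventCount_lt_top hA hfin] with ω hω
  refine (ENNReal.summable_toReal hω.ne).congr fun k => ?_
  by_cases h : ω ∈ A k <;> simp [h]

lemma integrable_toReal_eventCount (hA : ∀ k, MeasurableSet (A k))
    (hfin : ∑' k, μ (A k) ≠ ∞) :
    Integrable (fun ω => (eventCount A ω).toReal) μ :=
  integrable_toReal_of_lintegral_ne_top (measurable_eventCount hA).aemeasurable
    (lintegral_eventCount hA ▸ hfin)

lemma integral_toReal_eventCount (hA : ∀ k, MeasurableSet (A k))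
    (hfin : ∑' k, μ (A k) ≠ ∞) :
    ∫ ω, (eventCount A ω).toReal ∂μ = (∑' k, μ (A k)).toReal := by
  rw [integral_toReal (measurable_eventCount hA).aemeasurable (ae_eventCount_lt_top hA hfin),
    lintegral_eventCount hA]

lemma memLp_two_toReal_eventCount (hA : ∀ k, MeasurableSet (A k))
    (hAA : ∀ k j, k ≠ j → μ (A k ∩ A j) = μ (A k) * μ (A j)) (hfin : ∑' k, μ (A k) ≠ ∞) :
    MemLp (fun ω => (eventCount A ω).toReal) 2 μ := by
  refine (memLp_two_iff_integrable_sq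
    (measurable_eventCount hA).ennreal_toReal.aestronglyMeasurable).2 ?_
  simp_rw [sq, ← ENNReal.toReal_mul, eventCount_mul_eventCount]
  exact integrable_toReal_eventCount (fun q => (hA q.1).inter (hA q.2))
    (tsum_measure_inter_ne_top hAA hfin hfin)

lemma covariance_toReal_eventCount [IsProbabilityMeasure μ] (hA : ∀ k, MeasurableSet (A k))
    (hB : ∀ k, MeasurableSet (B k)) (hAB : ∀ k j, k ≠ j → μ (A k ∩ B j) = μ (A k) * μ (B j))
    (hAfin : ∑' k, μ (A k) ≠ ∞) (hBfin : ∑' k, μ (B k) ≠ ∞)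
    (hAL2 : MemLp (fun ω => (eventCount A ω).toReal) 2 μ)
    (hBL2 : MemLp (fun ω => (eventCount B ω).toReal) 2 μ) :
    cov[fun ω => (eventCount A ω).toReal, fun ω => (eventCount B ω).toReal; μ]
      = ∑' k, (μ.real (A k ∩ B k) - μ.real (A k) * μ.real (B k)) := by
  have hABfin := tsum_measure_inter_ne_top hAB hAfin hBfin
  have hprod : ∑' q : ι × ι, μ (A q.1) * μ (B q.2) ≠ ∞ := by
    rw [← ENNReal.tsum_mul_tsum (fun k => μ (A k)) (fun k => μ (B k))]
    exact ENNReal.mul_ne_top hAfin hBfin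
  have hdiag : Function.support (fun q : ι × ι =>
      μ.real (A q.1 ∩ B q.2) - μ.real (A q.1) * μ.real (B q.2))
      ⊆ Set.range fun k => (k, k) := by
    rintro ⟨k, j⟩ hkj
    by_contra h
    have hne : k ≠ j := fun h' => h ⟨k, by rw [h']⟩
    simp [measureReal_def, hAB k j hne] at hkj
  rw [covariance_eq_sub hAL2 hBL2]
  simp only [Pi.mul_apply, ← ENNReal.toReal_mul, eventCount_mul_eventCount]
  rw [integral_toReal_eventCount (A := fun q : ι × ι => A q.1 ∩ B q.2)
      (fun q => (hA q.1).inter (hB q.2)) hABfin,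
    integral_toReal_eventCount hA hAfin, integral_toReal_eventCount hB hBfin,
    ← ENNReal.toReal_mul, ENNReal.tsum_mul_tsum,
    ENNReal.tsum_toReal_eq fun _ => measure_ne_top _ _,
    ENNReal.tsum_toReal_eq fun _ =>
      ENNReal.mul_ne_top (measure_ne_top _ _) (measure_ne_top _ _),
    ← (ENNReal.summable_toReal hABfin).tsum_sub (ENNReal.summable_toReal hprod)]
  simp only [ENNReal.toReal_mul, ← measureReal_def]
  exact (Function.Injective.tsum_eq (fun k j h => (Prod.mk.inj h).1) hdiag).symm

end EventCount

lemma tsum_measure_ne_top_of_measureReal_le {Ω ι : Type*} [MeasurableSpace Ω] {μ : Measure Ω}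
    [IsFiniteMeasure μ] {A : ι → Set Ω} {c : ι → ℝ} (hc : Summable c)
    (hle : ∀ k, μ.real (A k) ≤ c k) :
    ∑' k, μ (A k) ≠ ∞ := by
  refine ne_top_of_le_ne_top (ENNReal.ofReal_ne_top (r := ∑' k, c k)) ?_
  rw [ENNReal.ofReal_tsum_of_nonneg (fun k => measureReal_nonneg.trans (hle k)) hc]
  exact ENNReal.tsum_le_tsum fun k =>
    (ofReal_measureReal).ge.trans (ENNReal.ofReal_le_ofReal (hle k))

section IndependentSequence

variable {Ω ι β : Type*} {Z : ι → Ω → β}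

lemma ite_eq_indicator_setOf (Q : β → Prop) [DecidablePred Q] (ω : Ω) :
    (fun k => if Q (Z k ω) then (1 : ℝ) else 0) = fun k => {ω | Q (Z k ω)}.indicator 1 ω := by
  simp only [Set.indicator_apply, Set.mem_ofPred_eq, Pi.one_apply]

lemma tsum_ite_eq_toReal_eventCount (Q : β → Prop) [DecidablePred Q] :
    (fun ω => ∑' k, if Q (Z k ω) then (1 : ℝ) else 0)
      = fun ω => (eventCount (fun k => {ω | Q (Z k ω)}) ω).toReal :=
  funext fun ω => by rw [ite_eq_indicator_setOf, toReal_eventCount]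

variable [MeasurableSpace Ω] [MeasurableSpace β] [Countable ι] {μ : Measure Ω}

lemma ae_summable_ite (Q : β → Prop) [DecidablePred Q] (hZ : ∀ k, Measurable (Z k))
    (hQ : MeasurableSet {b | Q b}) (hfin : ∑' k, μ {ω | Q (Z k ω)} ≠ ∞) :
    ∀ᵐ ω ∂μ, Summable fun k => if Q (Z k ω) then (1 : ℝ) else 0 := by
  filter_upwards [ae_summable_indicator (fun k => hZ k hQ) hfin] with ω hω
  rwa [ite_eq_indicator_setOf]

lemma memLp_two_tsum_ite (Q : β → Prop) [DecidablePred Q] (hZ : ∀ k, Measurable (Z k))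
    (hind : Pairwise fun k j => IndepFun (Z k) (Z j) μ) (hQ : MeasurableSet {b | Q b})
    (hfin : ∑' k, μ {ω | Q (Z k ω)} ≠ ∞) :
    MemLp (fun ω => ∑' k, if Q (Z k ω) then (1 : ℝ) else 0) 2 μ := by
  rw [tsum_ite_eq_toReal_eventCount]
  exact memLp_two_toReal_eventCount (fun k => hZ k hQ)
    (fun k j hkj => (hind hkj).measure_inter_preimage_eq_mul _ _ hQ hQ) hfin

lemma covariance_tsum_ite [IsProbabilityMeasure μ] (Q Q' : β → Prop) [DecidablePred Q]
    [DecidablePred Q'] (hZ : ∀ k, Measurable (Z k))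
    (hind : Pairwise fun k j => IndepFun (Z k) (Z j) μ) (hQ : MeasurableSet {b | Q b})
    (hQ' : MeasurableSet {b | Q' b}) (hfin : ∑' k, μ {ω | Q (Z k ω)} ≠ ∞)
    (hfin' : ∑' k, μ {ω | Q' (Z k ω)} ≠ ∞) :
    cov[fun ω => ∑' k, if Q (Z k ω) then (1 : ℝ) else 0,
        fun ω => ∑' k, if Q' (Z k ω) then (1 : ℝ) else 0; μ]
      = ∑' k, (μ.real {ω | Q (Z k ω) ∧ Q' (Z k ω)}
          - μ.real {ω | Q (Z k ω)} * μ.real {ω | Q' (Z k ω)}) := by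
  have hL2 := memLp_two_tsum_ite Q hZ hind hQ hfin
  have hL2' := memLp_two_tsum_ite Q' hZ hind hQ' hfin'
  rw [tsum_ite_eq_toReal_eventCount] at hL2 hL2'
  rw [tsum_ite_eq_toReal_eventCount Q, tsum_ite_eq_toReal_eventCount Q']
  exact covariance_toReal_eventCount (fun k => hZ k hQ) (fun k => hZ k hQ')
    (fun k j hkj => (hind hkj).measure_inter_preimage_eq_mul _ _ hQ hQ') hfin hfin' hL2 hL2'

end IndependentSequence

lemma ProbabilityTheory.iIndepFun.pairwise_indepFun_prodMk {Ω β : Type*} [MeasurableSpace Ω]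
    [MeasurableSpace β] {μ : Measure Ω} {X Y : ℕ → Ω → β} (hX : ∀ k, Measurable (X k))
    (hY : ∀ k, Measurable (Y k))
    (h : iIndepFun (Sum.elim X Y) μ) :
    Pairwise fun k j => IndepFun (fun ω => (X k ω, Y k ω)) (fun ω => (X j ω, Y j ω)) μ :=
  fun k j hkj => h.indepFun_prodMk_prodMk (Sum.rec hX hY) (.inl k) (.inr k) (.inl j) (.inr j)
    (by simpa) (by simp) (by simp) (by simpa)

namespace ProbabilityTheory.IndepFun

variable {Ω β γ : Type*} [MeasurableSpace Ω] [MeasurableSpace β] [MeasurableSpace γ]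
  {μ : Measure Ω}

lemma measureReal_setOf_and {X : Ω → β} {Y : Ω → γ} (h : IndepFun X Y μ) {p : β → Prop}
    {q : γ → Prop} (hp : MeasurableSet {b | p b}) (hq : MeasurableSet {c | q c}) :
    μ.real {ω | p (X ω) ∧ q (Y ω)} = μ.real {ω | p (X ω)} * μ.real {ω | q (Y ω)} := by
  simp only [measureReal_def, ← ENNReal.toReal_mul]
  exact congrArg ENNReal.toReal (h.measure_inter_preimage_eq_mul _ _ hp hq)

lemma measureReal_odd_add [IsProbabilityMeasure μ] {X Y : Ω → ℕ} (hXY : IndepFun X Y μ)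
    (hX : Measurable X) (hY : Measurable Y) :
    μ.real {ω | Odd (X ω + Y ω)} = μ.real {ω | Odd (X ω)} * (1 - μ.real {ω | Odd (Y ω)})
      + (1 - μ.real {ω | Odd (X ω)}) * μ.real {ω | Odd (Y ω)} := by
  have hsplit : {ω | Odd (X ω + Y ω)}
      = {ω | Odd (X ω) ∧ ¬Odd (Y ω)} ∪ {ω | ¬Odd (X ω) ∧ Odd (Y ω)} := by
    ext ω
    simp only [Set.mem_union, Set.mem_ofPred_eq, Nat.odd_add, ← Nat.not_odd_iff_even]
    tauto
  have hodd : MeasurableSet {n : ℕ | Odd n} := .of_discrete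
  have heven : MeasurableSet {n : ℕ | ¬Odd n} := .of_discrete
  have hm : MeasurableSet {ω | ¬Odd (X ω) ∧ Odd (Y ω)} := (hX heven).inter (hY hodd)
  rw [hsplit, measureReal_union (Set.disjoint_left.2 fun ω h1 h2 => h2.1 h1.1) hm,
    hXY.measureReal_setOf_and hodd heven, hXY.measureReal_setOf_and heven hodd,
    show {ω | ¬Odd (X ω)} = {ω | Odd (X ω)}ᶜ from rfl,
    show {ω | ¬Odd (Y ω)} = {ω | Odd (Y ω)}ᶜ from rfl,
    probReal_compl_eq_one_sub (s := {ω | Odd (X ω)}) (hX hodd),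
    probReal_compl_eq_one_sub (s := {ω | Odd (Y ω)}) (hY hodd)]

end ProbabilityTheory.IndepFun

section Poisson

variable {Ω : Type*} [MeasurableSpace Ω] {P : Measure Ω} {X Y : Ω → ℕ} {r τ t : ℝ}

lemma measureReal_odd_of_poisson [IsFiniteMeasure P] (hX : Measurable X) {a : ℝ}
    (hpois : ∀ j : ℕ, P.real {ω | X ω = j} = exp (-a) * a ^ j / j !) :
    P.real {ω | Odd (X ω)} = (1 - exp (-a) ^ 2) / 2 := by
  have hunion : {ω | Odd (X ω)} = ⋃ n : ℕ, {ω | X ω = 2 * n + 1} := by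
    ext ω; simp [Odd]
  have hdisj : Pairwise (Function.onFun Disjoint fun n : ℕ => {ω | X ω = 2 * n + 1}) :=
    fun m n hmn => Set.disjoint_left.2 fun ω h1 h2 => hmn (by simp at h1 h2; omega)
  rw [hunion, measureReal_def, measure_iUnion hdisj fun n => hX (measurableSet_singleton _),
    ENNReal.tsum_toReal_eq fun _ => measure_ne_top _ _]
  simp_rw [← measureReal_def, hpois, mul_div_assoc, tsum_mul_left, (hasSum_sinh a).tsum_eq,
    sinh_eq, exp_neg]
  field_simp

variable [IsProbabilityMeasure P]

lemma measureReal_one_le_add_of_poisson (hX : Measurable X) (hY : Measurable Y)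
    (hXY : IndepFun X Y P)
    (hXpois : ∀ j : ℕ, P.real {ω | X ω = j} = exp (-(r * τ)) * (r * τ) ^ j / j !)
    (hYpois : ∀ j : ℕ,
      P.real {ω | Y ω = j} = exp (-(r * (t - τ))) * (r * (t - τ)) ^ j / j !) :
    P.real {ω | 1 ≤ X ω + Y ω} = 1 - exp (-(r * t)) := by
  have hzero : MeasurableSet {n : ℕ | n = 0} := .of_discrete
  have hboth : MeasurableSet {ω | X ω = 0 ∧ Y ω = 0} := (hX hzero).inter (hY hzero)
  have hcompl : {ω | 1 ≤ X ω + Y ω} = {ω | X ω = 0 ∧ Y ω = 0}ᶜ := by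
    ext ω; simp only [Set.mem_compl_iff, Set.mem_ofPred_eq]; omega
  rw [hcompl, probReal_compl_eq_one_sub hboth, hXY.measureReal_setOf_and hzero hzero, hXpois 0,
    hYpois 0]
  simp only [pow_zero, Nat.factorial_zero, Nat.cast_one, mul_one, div_one, ← exp_add]
  ring_nf

lemma measureReal_one_le_inter_odd_add_sub_mul (hX : Measurable X) (hY : Measurable Y)
    (hXY : IndepFun X Y P)
    (hXpois : ∀ j : ℕ, P.real {ω | X ω = j} = exp (-(r * τ)) * (r * τ) ^ j / j !)
    (hYpois : ∀ j : ℕ,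
      P.real {ω | Y ω = j} = exp (-(r * (t - τ))) * (r * (t - τ)) ^ j / j !) :
    P.real {ω | 1 ≤ X ω ∧ Odd (X ω + Y ω)}
      - P.real {ω | 1 ≤ X ω} * P.real {ω | Odd (X ω + Y ω)}
      = 1 / 2 * (exp (-(r * (2 * t - τ))) - exp (-(r * (2 * t + τ)))) := by
  have hXodd := measureReal_odd_of_poisson hX hXpois
  have hYodd := measureReal_odd_of_poisson hY hYpois
  set E := exp (-(r * τ))
  set F := exp (-(r * (t - τ)))
  have hzero : MeasurableSet {n : ℕ | n = 0} := .of_discrete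
  have hodd : MeasurableSet {n : ℕ | Odd n} := .of_discrete
  have hX0 : P.real {ω | X ω = 0} = E := by simpa using hXpois 0
  have hocc : P.real {ω | 1 ≤ X ω} = 1 - E := by
    rw [← hX0, ← probReal_compl_eq_one_sub (s := {ω | X ω = 0}) (hX hzero)]
    congr 1; ext ω; simp [Nat.one_le_iff_ne_zero]
  have hsum : P.real {ω | Odd (X ω + Y ω)} = (1 - E ^ 2 * F ^ 2) / 2 := by
    rw [hXY.measureReal_odd_add hX hY, hXodd, hYodd]; ring
  have hsplit : P.real {ω | Odd (X ω + Y ω)}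
      = P.real {ω | 1 ≤ X ω ∧ Odd (X ω + Y ω)} + P.real {ω | X ω = 0 ∧ Odd (Y ω)} := by
    have hm : MeasurableSet {ω | X ω = 0 ∧ Odd (Y ω)} := (hX hzero).inter (hY hodd)
    rw [← measureReal_union (Set.disjoint_left.2 fun ω h1 h2 => by simp_all) hm]
    congr 1; ext ω
    by_cases h : X ω = 0 <;> simp [h, Nat.one_le_iff_ne_zero]
  have hzero_odd : P.real {ω | X ω = 0 ∧ Odd (Y ω)} = E * ((1 - F ^ 2) / 2) := by
    rw [hXY.measureReal_setOf_and hzero hodd, hX0, hYodd]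
  have e1 : exp (-(r * (2 * t - τ))) = E * F ^ 2 := by
    rw [← exp_nat_mul, ← exp_add]; congr 1; push_cast; ring
  have e2 : exp (-(r * (2 * t + τ))) = E ^ 3 * F ^ 2 := by
    rw [← exp_nat_mul, ← exp_nat_mul, ← exp_add]; congr 1; push_cast; ring
  rw [e1, e2, hocc, hsum]
  linear_combination -hsplit + hsum - hzero_odd

lemma measureReal_one_le_add_inter_odd_sub_mul (hX : Measurable X) (hY : Measurable Y)
    (hXY : IndepFun X Y P)
    (hXpois : ∀ j : ℕ, P.real {ω | X ω = j} = exp (-(r * τ)) * (r * τ) ^ j / j !)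
    (hYpois : ∀ j : ℕ,
      P.real {ω | Y ω = j} = exp (-(r * (t - τ))) * (r * (t - τ)) ^ j / j !) :
    P.real {ω | 1 ≤ X ω + Y ω ∧ Odd (X ω)}
      - P.real {ω | 1 ≤ X ω + Y ω} * P.real {ω | Odd (X ω)}
      = 1 / 2 * (exp (-(r * t)) - exp (-(r * (2 * τ + t)))) := by
  have hodd_sub : {ω | 1 ≤ X ω + Y ω ∧ Odd (X ω)} = {ω | Odd (X ω)} := by
    ext ω
    exact ⟨And.right, fun h => ⟨h.pos.trans_le (Nat.le_add_right _ _), h⟩⟩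
  have e : exp (-(r * (2 * τ + t))) = exp (-(r * τ)) ^ 2 * exp (-(r * t)) := by
    rw [← exp_nat_mul, ← exp_add]; congr 1; push_cast; ring
  rw [hodd_sub, measureReal_one_le_add_of_poisson hX hY hXY hXpois hYpois,
    measureReal_odd_of_poisson hX hXpois, e]
  ring

end Poisson

lemma tsum_measure_one_le_add_ne_top {Ω : Type*} [MeasurableSpace Ω] {P : Measure Ω}
    [IsProbabilityMeasure P] {X Y : ℕ → Ω → ℕ} {p : ℕ → ℝ} {τ t : ℝ} (hp : Summable p)
    (hX : ∀ k, Measurable (X k)) (hY : ∀ k, Measurable (Y k))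
    (hXY : ∀ k, IndepFun (X k) (Y k) P)
    (hXpois : ∀ k, ∀ j : ℕ, P.real {ω | X k ω = j} = exp (-(p k * τ)) * (p k * τ) ^ j / j !)
    (hYpois : ∀ k, ∀ j : ℕ,
      P.real {ω | Y k ω = j} = exp (-(p k * (t - τ))) * (p k * (t - τ)) ^ j / j !) :
    ∑' k, P {ω | 1 ≤ X k ω + Y k ω} ≠ ∞ :=
  tsum_measure_ne_top_of_measureReal_le (hp.mul_right t) fun k => by
    rw [measureReal_one_le_add_of_poisson (hX k) (hY k) (hXY k) (hXpois k) (hYpois k)]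
    linarith [add_one_le_exp (-(p k * t))]

theorem covariance_occupancy_odd_occupancy_general
    {Ω : Type*} [MeasurableSpace Ω] (P : Measure Ω) [IsProbabilityMeasure P]
    (p : ℕ → ℝ) (hp_sum : ∑' k, p k = 1)
    (τ t : ℝ)
    (X Y : ℕ → Ω → ℕ) (hX_meas : ∀ k, Measurable (X k)) (hY_meas : ∀ k, Measurable (Y k))
    (h_indep : iIndepFun (Sum.elim X Y) P)
    (hX : ∀ k, ∀ j : ℕ, (P {ω | X k ω = j}).toReal
      = Real.exp (-(p k * τ)) * (p k * τ) ^ j / j.factorial)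
    (hY : ∀ k, ∀ j : ℕ, (P {ω | Y k ω = j}).toReal
      = Real.exp (-(p k * (t - τ))) * (p k * (t - τ)) ^ j / j.factorial)
    (Rτ Rt Uτ Ut : Ω → ℝ)
    (hRτ : ∀ ω, Rτ ω = ∑' k, if 1 ≤ X k ω then (1 : ℝ) else 0)
    (hRt : ∀ ω, Rt ω = ∑' k, if 1 ≤ X k ω + Y k ω then (1 : ℝ) else 0)
    (hUτ : ∀ ω, Uτ ω = ∑' k, if Odd (X k ω) then (1 : ℝ) else 0)
    (hUt : ∀ ω, Ut ω = ∑' k, if Odd (X k ω + Y k ω) then (1 : ℝ) else 0) :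
    (∀ᵐ ω ∂P, Summable fun k => if 1 ≤ X k ω then (1 : ℝ) else 0) ∧
    (∀ᵐ ω ∂P, Summable fun k => if 1 ≤ X k ω + Y k ω then (1 : ℝ) else 0) ∧
    (∀ᵐ ω ∂P, Summable fun k => if Odd (X k ω) then (1 : ℝ) else 0) ∧
    (∀ᵐ ω ∂P, Summable fun k => if Odd (X k ω + Y k ω) then (1 : ℝ) else 0) ∧
    MemLp Rτ 2 P ∧ MemLp Rt 2 P ∧ MemLp Uτ 2 P ∧ MemLp Ut 2 P ∧
    (∫ ω, (Rτ ω - ∫ ω', Rτ ω' ∂P) * (Ut ω - ∫ ω', Ut ω' ∂P) ∂P)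
      = (1 / 2) * ∑' k, (Real.exp (-(p k * (2 * t - τ)))
          - Real.exp (-(p k * (2 * t + τ)))) ∧
    (∫ ω, (Rt ω - ∫ ω', Rt ω' ∂P) * (Uτ ω - ∫ ω', Uτ ω' ∂P) ∂P)
      = (1 / 2) * ∑' k, (Real.exp (-(p k * t))
          - Real.exp (-(p k * (2 * τ + t)))) := by
  obtain rfl : Rτ = _ := funext hRτ
  obtain rfl : Rt = _ := funext hRt
  obtain rfl : Uτ = _ := funext hUτ
  obtain rfl : Ut = _ := funext hUt
  let Z : ℕ → Ω → ℕ × ℕ := fun k ω => (X k ω, Y k ω)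
  have hZ : ∀ k, Measurable (Z k) := fun k => (hX_meas k).prodMk (hY_meas k)
  have hZ_indep := h_indep.pairwise_indepFun_prodMk hX_meas hY_meas
  have hXY : ∀ k, IndepFun (X k) (Y k) P := fun k =>
    h_indep.indepFun (i := .inl k) (j := .inr k) (by simp)
  have hp : Summable p := by
    by_contra h
    simp [tsum_eq_zero_of_not_summable h] at hp_sum
  have hocc := tsum_measure_one_le_add_ne_top hp hX_meas hY_meas hXY hX hY
  have hcount (Q : ℕ × ℕ → Prop) [DecidablePred Q] (hQ : ∀ q, Q q → 1 ≤ q.1 + q.2) :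
      ∑' k, P {ω | Q (Z k ω)} ≠ ∞ ∧
        (∀ᵐ ω ∂P, Summable fun k => if Q (Z k ω) then (1 : ℝ) else 0) ∧
        MemLp (fun ω => ∑' k, if Q (Z k ω) then (1 : ℝ) else 0) 2 P := by
    have hfin : ∑' k, P {ω | Q (Z k ω)} ≠ ∞ :=
      ne_top_of_le_ne_top hocc (ENNReal.tsum_le_tsum fun k => measure_mono fun ω => hQ _)
    exact ⟨hfin, ae_summable_ite Q hZ .of_discrete hfin,
      memLp_two_tsum_ite Q hZ hZ_indep .of_discrete hfin⟩
  obtain ⟨hRτ_fin, hRτ_sum, hRτ_L2⟩ := hcount (fun q => 1 ≤ q.1) fun q h => le_add_right h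
  obtain ⟨hRt_fin, hRt_sum, hRt_L2⟩ := hcount (fun q => 1 ≤ q.1 + q.2) fun q h => h
  obtain ⟨hUτ_fin, hUτ_sum, hUτ_L2⟩ := hcount (fun q => Odd q.1) fun q h => le_add_right h.pos
  obtain ⟨hUt_fin, hUt_sum, hUt_L2⟩ := hcount (fun q => Odd (q.1 + q.2)) fun q h => h.pos
  refine ⟨hRτ_sum, hRt_sum, hUτ_sum, hUt_sum, hRτ_L2, hRt_L2, hUτ_L2, hUt_L2, ?_, ?_⟩
  · refine (covariance_tsum_ite (fun q => 1 ≤ q.1) (fun q => Odd (q.1 + q.2)) hZ hZ_indep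
      .of_discrete .of_discrete hRτ_fin hUt_fin).trans ?_
    rw [← tsum_mul_left]
    exact tsum_congr fun k => measureReal_one_le_inter_odd_add_sub_mul (hX_meas k) (hY_meas k)
      (hXY k) (hX k) (hY k)
  · refine (covariance_tsum_ite (fun q => 1 ≤ q.1 + q.2) (fun q => Odd q.1) hZ hZ_indep
      .of_discrete .of_discrete hRt_fin hUτ_fin).trans ?_
    rw [← tsum_mul_left]
    exact tsum_congr fun k => measureReal_one_le_add_inter_odd_sub_mul (hX_meas k) (hY_meas k)
      (hXY k) (hX k) (hY k)

/-- Cross-covariances of the Poissonized occupancy and odd-occupancy processes at times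
`τ ≤ t`: `Cov(R(τ), U(t)) = (1/2) ∑_k (e^{−p_k(2t−τ)} − e^{−p_k(2t+τ)})` and
`Cov(R(t), U(τ)) = (1/2) ∑_k (e^{−p_k t} − e^{−p_k(2τ+t)})`. -/
theorem covariance_occupancy_odd_occupancy
    {Ω : Type*} [MeasurableSpace Ω] (P : Measure Ω) [IsProbabilityMeasure P]
    (p : ℕ → ℝ) (hp_pos : ∀ k, 0 < p k) (hp_sum : ∑' k, p k = 1)
    (τ t : ℝ) (hτ : 0 < τ) (hτt : τ ≤ t)
    (X Y : ℕ → Ω → ℕ) (hX_meas : ∀ k, Measurable (X k)) (hY_meas : ∀ k, Measurable (Y k))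
    (h_indep : iIndepFun (Sum.elim X Y) P)
    (hX : ∀ k, ∀ j : ℕ, (P {ω | X k ω = j}).toReal
      = Real.exp (-(p k * τ)) * (p k * τ) ^ j / j.factorial)
    (hY : ∀ k, ∀ j : ℕ, (P {ω | Y k ω = j}).toReal
      = Real.exp (-(p k * (t - τ))) * (p k * (t - τ)) ^ j / j.factorial)
    (Rτ Rt Uτ Ut : Ω → ℝ)
    (hRτ : ∀ ω, Rτ ω = ∑' k, if 1 ≤ X k ω then (1 : ℝ) else 0)
    (hRt : ∀ ω, Rt ω = ∑' k, if 1 ≤ X k ω + Y k ω then (1 : ℝ) else 0)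
    (hUτ : ∀ ω, Uτ ω = ∑' k, if Odd (X k ω) then (1 : ℝ) else 0)
    (hUt : ∀ ω, Ut ω = ∑' k, if Odd (X k ω + Y k ω) then (1 : ℝ) else 0) :
    (∀ᵐ ω ∂P, Summable fun k => if 1 ≤ X k ω then (1 : ℝ) else 0) ∧
    (∀ᵐ ω ∂P, Summable fun k => if 1 ≤ X k ω + Y k ω then (1 : ℝ) else 0) ∧
    (∀ᵐ ω ∂P, Summable fun k => if Odd (X k ω) then (1 : ℝ) else 0) ∧
    (∀ᵐ ω ∂P, Summable fun k => if Odd (X k ω + Y k ω) then (1 : ℝ) else 0) ∧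
    MemLp Rτ 2 P ∧ MemLp Rt 2 P ∧ MemLp Uτ 2 P ∧ MemLp Ut 2 P ∧
    (∫ ω, (Rτ ω - ∫ ω', Rτ ω' ∂P) * (Ut ω - ∫ ω', Ut ω' ∂P) ∂P)
      = (1 / 2) * ∑' k, (Real.exp (-(p k * (2 * t - τ)))
          - Real.exp (-(p k * (2 * t + τ)))) ∧
    (∫ ω, (Rt ω - ∫ ω', Rt ω' ∂P) * (Uτ ω - ∫ ω', Uτ ω' ∂P) ∂P)
      = (1 / 2) * ∑' k, (Real.exp (-(p k * t))
          - Real.exp (-(p k * (2 * τ + t)))) :=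
  covariance_occupancy_odd_occupancy_general P p hp_sum τ t X Y hX_meas hY_meas h_indep hX hY Rτ Rt
    Uτ Ut hRτ hRt hUτ hUt
end
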